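/- arXiv:1504.01564 — 6 statements merged into one kernel-verified Lean document; each statement's English description precedes it below -/
import Mathlib

section
/- For all natural numbers n and m, S_n * S_m = S_{n+m}, where S_n * S_m = {F ⊆ ℕ : F = F_1 ∪ ⋯ ∪ F_k with F_1 < ⋯ < F_k ∈ S_m and {min F_1, …, min F_k} ∈ S_n}. -/
/-- The Schreier families `S_n` of finite subsets of `ℕ`, defined inductively.
`S_0` consists of singletons and the empty set; `S_{n+1}` consists of unions
`F_1 ∪ ⋯ ∪ F_k` of successive nonempty members of `S_n` with `k ≤ min F_1`
(equivalently `k ≤ a` for every `a ∈ F`), together with the empty set. -/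
def Schreier : ℕ → Set (Finset ℕ)
  | 0 => {F | F.card ≤ 1}
  | n + 1 => {F | ∃ (k : ℕ) (G : Fin k → Finset ℕ),
      (∀ i, G i ∈ Schreier n) ∧
      (∀ i, (G i).Nonempty) ∧
      (∀ i j : Fin k, i < j → ∀ a ∈ G i, ∀ b ∈ G j, a < b) ∧
      F = Finset.univ.biUnion G ∧
      (∀ a ∈ F, k ≤ a)}

/-- The convolution `S_n * S_m`: all unions `F_1 ∪ ⋯ ∪ F_k` of successive
nonempty members of `S_m` whose set of minima belongs to `S_n`. -/
def SchreierConv (n m : ℕ) : Set (Finset ℕ) :=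
  {F | ∃ (k : ℕ) (G : Fin k → Finset ℕ),
    (∀ i, G i ∈ Schreier m) ∧
    (∀ i, (G i).Nonempty) ∧
    (∀ i j : Fin k, i < j → ∀ a ∈ G i, ∀ b ∈ G j, a < b) ∧
    F = Finset.univ.biUnion G ∧
    (Finset.univ.image fun i => sInf ((G i : Finset ℕ) : Set ℕ)) ∈ Schreier n}

namespace SchreierAux

open Finset

lemma sInf_mem' {s : Finset ℕ} (h : s.Nonempty) : sInf ((s : Finset ℕ) : Set ℕ) ∈ s := by
  have := Nat.sInf_mem (s := ((s : Finset ℕ) : Set ℕ)) (by exact_mod_cast h)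
  exact_mod_cast this

lemma sInf_le' {s : Finset ℕ} {a : ℕ} (h : a ∈ s) : sInf ((s : Finset ℕ) : Set ℕ) ≤ a :=
  Nat.sInf_le (by exact_mod_cast h)

lemma empty_mem : ∀ n, (∅ : Finset ℕ) ∈ Schreier n
  | 0 => by simp [Schreier]
  | n + 1 => ⟨0, fun i => ∅, fun i => i.elim0, fun i => i.elim0, fun i => i.elim0,
      by simp, by simp⟩

/-- A family of successive nonempty members of `S_m`. -/
def Fam (m : ℕ) {k : ℕ} (G : Fin k → Finset ℕ) : Prop :=
  (∀ i, G i ∈ Schreier m) ∧ (∀ i, (G i).Nonempty) ∧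
  (∀ i j : Fin k, i < j → ∀ a ∈ G i, ∀ b ∈ G j, a < b)

/-- `F` is a union of a family of successive nonempty members of `S_m` with minima set `M`. -/
def Piece (m : ℕ) (F M : Finset ℕ) : Prop :=
  ∃ (k : ℕ) (G : Fin k → Finset ℕ), Fam m G ∧
    F = Finset.univ.biUnion G ∧
    M = Finset.univ.image (fun i => sInf ((G i : Finset ℕ) : Set ℕ))

lemma schreierConv_iff {n m : ℕ} {F : Finset ℕ} :
    F ∈ SchreierConv n m ↔ ∃ M, Piece m F M ∧ M ∈ Schreier n := by
  constructor
  · rintro ⟨k, G, h1, h2, h3, h4, h5⟩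
    exact ⟨_, ⟨k, G, ⟨h1, h2, h3⟩, h4, rfl⟩, h5⟩
  · rintro ⟨M, ⟨k, G, ⟨h1, h2, h3⟩, h4, h5⟩, h6⟩
    exact ⟨k, G, h1, h2, h3, h4, h5 ▸ h6⟩

lemma min_lt_min {m k : ℕ} {G : Fin k → Finset ℕ} (h : Fam m G) {i j : Fin k} (hij : i < j) :
    sInf ((G i : Finset ℕ) : Set ℕ) < sInf ((G j : Finset ℕ) : Set ℕ) :=
  h.2.2 i j hij _ (sInf_mem' (h.2.1 i)) _ (sInf_mem' (h.2.1 j))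

lemma lt_of_min_lt {m k : ℕ} {G : Fin k → Finset ℕ} (h : Fam m G) {i j : Fin k}
    (hm : sInf ((G i : Finset ℕ) : Set ℕ) < sInf ((G j : Finset ℕ) : Set ℕ)) : i < j := by
  rcases lt_trichotomy i j with h' | h' | h'
  · exact h'
  · subst h'; exact absurd hm (lt_irrefl _)
  · exact absurd (min_lt_min h h') (by omega)

lemma min_injective {m k : ℕ} {G : Fin k → Finset ℕ} (h : Fam m G) :
    Function.Injective (fun i => sInf ((G i : Finset ℕ) : Set ℕ)) := by
  intro i j hij
  rcases lt_trichotomy i j with h' | h' | h'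
  · exact absurd (min_lt_min h h') (by simp only at hij; omega)
  · exact h'
  · exact absurd (min_lt_min h h') (by simp only at hij; omega)

lemma Piece.subset {m : ℕ} {F M : Finset ℕ} (h : Piece m F M) : M ⊆ F := by
  obtain ⟨k, G, fam, rfl, rfl⟩ := h
  intro c hc
  obtain ⟨i, -, rfl⟩ := Finset.mem_image.mp hc
  exact Finset.mem_biUnion.mpr ⟨i, Finset.mem_univ _, sInf_mem' (fam.2.1 i)⟩

lemma Piece.nonempty_iff {m : ℕ} {F M : Finset ℕ} (h : Piece m F M) :
    F.Nonempty ↔ M.Nonempty := by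
  obtain ⟨k, G, fam, rfl, rfl⟩ := h
  constructor
  · rintro ⟨a, ha⟩
    obtain ⟨i, -, -⟩ := Finset.mem_biUnion.mp ha
    exact ⟨_, Finset.mem_image.mpr ⟨i, Finset.mem_univ _, rfl⟩⟩
  · rintro ⟨c, hc⟩
    obtain ⟨i, -, -⟩ := Finset.mem_image.mp hc
    obtain ⟨a, ha⟩ := fam.2.1 i
    exact ⟨a, Finset.mem_biUnion.mpr ⟨i, Finset.mem_univ _, ha⟩⟩

lemma Piece.empty (m : ℕ) : Piece m ∅ ∅ :=
  ⟨0, fun i => ∅, ⟨fun i => i.elim0, fun i => i.elim0, fun i => i.elim0⟩, by simp, by simp⟩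

lemma Piece.single {m : ℕ} {F : Finset ℕ} (hF : F ∈ Schreier m) (h : F.Nonempty) :
    Piece m F {sInf ((F : Finset ℕ) : Set ℕ)} := by
  refine ⟨1, fun _ => F, ⟨fun _ => hF, fun _ => h, ?_⟩, by simp, by simp⟩
  intro i j hij
  simp [Subsingleton.elim i j] at hij

lemma fin_add_cases {k1 k2 : ℕ} (i : Fin (k1 + k2)) :
    (∃ j : Fin k1, i = Fin.castAdd k2 j) ∨ ∃ j : Fin k2, i = Fin.natAdd k1 j := by
  rcases lt_or_ge (i : ℕ) k1 with h | h
  · exact Or.inl ⟨⟨i, h⟩, by ext; simp⟩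
  · have := i.isLt
    exact Or.inr ⟨⟨(i : ℕ) - k1, by omega⟩, by ext; simp [Fin.natAdd]; omega⟩

lemma Piece.append {m : ℕ} {F1 M1 F2 M2 : Finset ℕ} (h1 : Piece m F1 M1) (h2 : Piece m F2 M2)
    (hlt : ∀ a ∈ F1, ∀ b ∈ F2, a < b) : Piece m (F1 ∪ F2) (M1 ∪ M2) := by
  obtain ⟨k1, G1, fam1, rfl, rfl⟩ := h1
  obtain ⟨k2, G2, fam2, rfl, rfl⟩ := h2
  refine ⟨k1 + k2, Fin.append G1 G2, ⟨?_, ?_, ?_⟩, ?_, ?_⟩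
  · intro i
    rcases fin_add_cases i with ⟨j, rfl⟩ | ⟨j, rfl⟩
    · rw [Fin.append_left]; exact fam1.1 j
    · rw [Fin.append_right]; exact fam2.1 j
  · intro i
    rcases fin_add_cases i with ⟨j, rfl⟩ | ⟨j, rfl⟩
    · rw [Fin.append_left]; exact fam1.2.1 j
    · rw [Fin.append_right]; exact fam2.2.1 j
  · intro i j hij a ha b hb
    rcases fin_add_cases i with ⟨i', rfl⟩ | ⟨i', rfl⟩ <;>
      rcases fin_add_cases j with ⟨j', rfl⟩ | ⟨j', rfl⟩
    · rw [Fin.append_left] at ha hb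
      exact fam1.2.2 i' j' (by rw [Fin.lt_def] at hij ⊢; exact hij) a ha b hb
    · rw [Fin.append_left] at ha
      rw [Fin.append_right] at hb
      exact hlt a (Finset.mem_biUnion.mpr ⟨i', Finset.mem_univ _, ha⟩) b
        (Finset.mem_biUnion.mpr ⟨j', Finset.mem_univ _, hb⟩)
    · exfalso
      have h1 := i'.isLt
      have h2 := j'.isLt
      simp [Fin.lt_def] at hij
      omega
    · rw [Fin.append_right] at ha hb
      exact fam2.2.2 i' j' (by rw [Fin.lt_def] at hij ⊢; simpa using hij) a ha b hb
  · ext a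
    simp only [Finset.mem_union, Finset.mem_biUnion, Finset.mem_univ, true_and]
    constructor
    · rintro (⟨i, hi⟩ | ⟨i, hi⟩)
      · exact ⟨Fin.castAdd k2 i, by rwa [Fin.append_left]⟩
      · exact ⟨Fin.natAdd k1 i, by rwa [Fin.append_right]⟩
    · rintro ⟨i, hi⟩
      rcases fin_add_cases i with ⟨j, rfl⟩ | ⟨j, rfl⟩
      · rw [Fin.append_left] at hi; exact Or.inl ⟨j, hi⟩
      · rw [Fin.append_right] at hi; exact Or.inr ⟨j, hi⟩
  · ext c
    simp only [Finset.mem_union, Finset.mem_image, Finset.mem_univ, true_and]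
    constructor
    · rintro (⟨i, hi⟩ | ⟨i, hi⟩)
      · exact ⟨Fin.castAdd k2 i, by rwa [Fin.append_left]⟩
      · exact ⟨Fin.natAdd k1 i, by rwa [Fin.append_right]⟩
    · rintro ⟨i, hi⟩
      rcases fin_add_cases i with ⟨j, rfl⟩ | ⟨j, rfl⟩
      · rw [Fin.append_left] at hi; exact Or.inl ⟨j, hi⟩
      · rw [Fin.append_right] at hi; exact Or.inr ⟨j, hi⟩

lemma biUnion_succ {l : ℕ} (H : Fin (l + 1) → Finset ℕ) :
    Finset.univ.biUnion H =
      (Finset.univ.biUnion fun j : Fin l => H j.castSucc) ∪ H (Fin.last l) := by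
  ext a
  simp only [Finset.mem_biUnion, Finset.mem_union, Finset.mem_univ, true_and]
  constructor
  · rintro ⟨i, hi⟩
    rcases Fin.eq_castSucc_or_eq_last i with ⟨j, rfl⟩ | rfl
    · exact Or.inl ⟨j, hi⟩
    · exact Or.inr hi
  · rintro (⟨j, hj⟩ | h)
    · exact ⟨j.castSucc, hj⟩
    · exact ⟨Fin.last l, h⟩

lemma Piece.concat {m : ℕ} : ∀ {l : ℕ} (H M : Fin l → Finset ℕ),
    (∀ j, Piece m (H j) (M j)) →
    (∀ i j : Fin l, i < j → ∀ a ∈ H i, ∀ b ∈ H j, a < b) →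
    Piece m (Finset.univ.biUnion H) (Finset.univ.biUnion M) := by
  intro l
  induction l with
  | zero => intro H M _ _; simpa using Piece.empty m
  | succ l ih =>
    intro H M hp hord
    rw [biUnion_succ H, biUnion_succ M]
    refine Piece.append
      (ih _ _ (fun j => hp _)
        (fun i j hij => hord _ _ (Fin.castSucc_lt_castSucc_iff.mpr hij)))
      (hp (Fin.last l)) ?_
    intro a ha b hb
    obtain ⟨j, -, haj⟩ := Finset.mem_biUnion.mp ha
    exact hord _ _ (Fin.castSucc_lt_last j) a haj b hb

lemma Piece.restrict {m k : ℕ} {G : Fin k → Finset ℕ} (h : Fam m G) (I : Finset (Fin k)) :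
    Piece m (I.biUnion G) (I.image fun i => sInf ((G i : Finset ℕ) : Set ℕ)) := by
  classical
  set e := I.orderIsoOfFin rfl with he
  refine ⟨I.card, fun t => G (e t), ⟨fun t => h.1 _, fun t => h.2.1 _, ?_⟩, ?_, ?_⟩
  · intro t t' htt' a ha b hb
    exact h.2.2 _ _ (Subtype.coe_lt_coe.mpr (e.strictMono htt')) a ha b hb
  · ext a
    simp only [Finset.mem_biUnion, Finset.mem_univ, true_and]
    constructor
    · rintro ⟨i, hiI, hai⟩
      exact ⟨e.symm ⟨i, hiI⟩, by simpa using hai⟩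
    · rintro ⟨t, ht⟩
      exact ⟨(e t : Fin k), (e t).2, ht⟩
  · ext c
    simp only [Finset.mem_image, Finset.mem_univ, true_and]
    constructor
    · rintro ⟨i, hiI, rfl⟩
      exact ⟨e.symm ⟨i, hiI⟩, by simp⟩
    · rintro ⟨t, rfl⟩
      exact ⟨(e t : Fin k), (e t).2, rfl⟩

end SchreierAux

open SchreierAux Finset in
/-- For all natural numbers `n` and `m`, `S_n * S_m = S_{n+m}`. -/
theorem schreierConv_eq (n m : ℕ) : SchreierConv n m = Schreier (n + m) := by
  induction n with
  | zero =>
    ext F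
    rw [Nat.zero_add]
    constructor
    · intro hF
      obtain ⟨M, ⟨k, G, fam, rfl, rfl⟩, hM⟩ := schreierConv_iff.mp hF
      simp only [Schreier, Set.mem_setOf_eq] at hM
      have hcard : (Finset.univ.image fun i => sInf ((G i : Finset ℕ) : Set ℕ)).card = k := by
        rw [Finset.card_image_of_injective _ (min_injective fam), Finset.card_univ,
          Fintype.card_fin]
      rw [hcard] at hM
      match k, G, fam with
      | 0, G, fam => simpa using empty_mem m
      | 1, G, fam =>
        have : Finset.univ.biUnion G = G 0 := by simp
        rw [this]; exact fam.1 0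
    · intro hF
      rcases F.eq_empty_or_nonempty with rfl | hne
      · exact schreierConv_iff.mpr ⟨∅, Piece.empty m, by simp [Schreier]⟩
      · exact schreierConv_iff.mpr ⟨_, Piece.single hF hne, by simp [Schreier]⟩
  | succ n ih =>
    have harith : n + 1 + m = (n + m) + 1 := by omega
    ext F
    rw [harith]
    constructor
    · intro hF
      obtain ⟨M, ⟨k, G, fam, rfl, hM⟩, hMS⟩ := schreierConv_iff.mp hF
      obtain ⟨l, N, hN1, hN2, hN3, hN4, hN5⟩ := hMS
      set I : Fin l → Finset (Fin k) :=
        fun j => Finset.univ.filter (fun i => sInf ((G i : Finset ℕ) : Set ℕ) ∈ N j) with hI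
      set H : Fin l → Finset ℕ := fun j => (I j).biUnion G with hH
      have himg : ∀ j, (I j).image (fun i => sInf ((G i : Finset ℕ) : Set ℕ)) = N j := by
        intro j
        ext c
        simp only [Finset.mem_image, hI, Finset.mem_filter, Finset.mem_univ, true_and]
        constructor
        · rintro ⟨i, h1, rfl⟩; exact h1
        · intro hc
          have hcM : c ∈ M := by
            rw [hN4]; exact Finset.mem_biUnion.mpr ⟨j, Finset.mem_univ _, hc⟩
          rw [hM] at hcM
          obtain ⟨i, -, rfl⟩ := Finset.mem_image.mp hcM
          exact ⟨i, hc, rfl⟩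
      have hpiece : ∀ j, Piece m (H j) (N j) := fun j => himg j ▸ Piece.restrict fam (I j)
      refine ⟨l, H, ?_, ?_, ?_, ?_, ?_⟩
      · intro j
        rw [← ih]
        exact schreierConv_iff.mpr ⟨N j, hpiece j, hN1 j⟩
      · intro j
        exact ((hpiece j).nonempty_iff).mpr (hN2 j)
      · intro j j' hjj' a ha b hb
        obtain ⟨i, hiI, hai⟩ := Finset.mem_biUnion.mp ha
        obtain ⟨i', hiI', hbi'⟩ := Finset.mem_biUnion.mp hb
        rw [hI, Finset.mem_filter] at hiI hiI'
        have hmin : sInf ((G i : Finset ℕ) : Set ℕ) < sInf ((G i' : Finset ℕ) : Set ℕ) :=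
          hN3 j j' hjj' _ hiI.2 _ hiI'.2
        exact fam.2.2 i i' (lt_of_min_lt fam hmin) a hai b hbi'
      · ext a
        simp only [Finset.mem_biUnion, Finset.mem_univ, true_and, hH]
        constructor
        · rintro ⟨i, hai⟩
          have : sInf ((G i : Finset ℕ) : Set ℕ) ∈ M := by
            rw [hM]; exact Finset.mem_image.mpr ⟨i, Finset.mem_univ _, rfl⟩
          rw [hN4] at this
          obtain ⟨j, -, hj⟩ := Finset.mem_biUnion.mp this
          exact ⟨j, i, by simp only [hI]; simp [hj], hai⟩
        · rintro ⟨j, i, -, hai⟩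
          exact ⟨i, hai⟩
      · intro a ha
        obtain ⟨i, -, hai⟩ := Finset.mem_biUnion.mp ha
        have h1 : sInf ((G i : Finset ℕ) : Set ℕ) ∈ M := by
          rw [hM]; exact Finset.mem_image.mpr ⟨i, Finset.mem_univ _, rfl⟩
        exact le_trans (hN5 _ h1) (sInf_le' hai)
    · intro hF
      obtain ⟨l, H, hH1, hH2, hH3, rfl, hH5⟩ := hF
      have hH1' : ∀ j, H j ∈ SchreierConv n m := fun j => by rw [ih]; exact hH1 j
      choose M hp hMS using fun j => schreierConv_iff.mp (hH1' j)
      refine schreierConv_iff.mpr ⟨Finset.univ.biUnion M, Piece.concat H M hp hH3, ?_⟩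
      refine ⟨l, M, hMS, ?_, ?_, rfl, ?_⟩
      · intro j
        exact ((hp j).nonempty_iff).mp (hH2 j)
      · intro j j' hjj' a ha b hb
        exact hH3 j j' hjj' a ((hp j).subset ha) b ((hp j').subset hb)
      · intro c hc
        obtain ⟨j, -, hcj⟩ := Finset.mem_biUnion.mp hc
        exact hH5 c (Finset.mem_biUnion.mpr ⟨j, Finset.mem_univ _, (hp j).subset hcj⟩)
end

section
/- If x = Σ_{i∈F} c_i e_i is an (n,ε)-basic special convex combination with 0 < ε < 1/2, and for i ∈ F ∖ {min F} we set c_i' = c_i / (Σ_{j∈F∖{min F}} c_j), then y = Σ_{i∈F∖{min F}} c_i' e_i is an (n,2ε)-basic special convex combination. -/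
/-- `x = ∑_{k∈F} c_k e_k` is an `(n,ε)`-basic special convex combination. -/
def IsBasicSCC (n : ℕ) (ε : ℝ) (F : Finset ℕ) (c : ℕ → ℝ) : Prop :=
  F ∈ Schreier n ∧ (∀ k ∈ F, 0 ≤ c k) ∧ (∑ k ∈ F, c k = 1) ∧
    ∀ G ⊆ F, G ∈ Schreier (n - 1) → ∑ k ∈ G, c k < ε

open Finset

/-- Empty blocks may be allowed in `S_{n+1}`: dropping them and reindexing the rest in order only
lowers the number of blocks. -/
lemma biUnion_mem_schreier_succ {n k : ℕ} (G : Fin k → Finset ℕ) (hG : ∀ i, G i ∈ Schreier n)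
    (hsucc : ∀ i j : Fin k, i < j → ∀ a ∈ G i, ∀ b ∈ G j, a < b)
    (hk : ∀ a ∈ univ.biUnion G, k ≤ a) :
    univ.biUnion G ∈ Schreier (n + 1) := by
  classical
  set idx : Finset (Fin k) := univ.filter fun i => (G i).Nonempty
  set e := idx.orderIsoOfFin rfl
  have hidx_card : idx.card ≤ k := (card_filter_le _ _).trans_eq (card_fin k)
  refine ⟨idx.card, fun j => G (e j), fun j => hG _, fun j => (mem_filter.1 (e j).2).2,
    fun i j hij => hsucc _ _ (e.strictMono hij), ?_, fun a ha => hidx_card.trans (hk a ha)⟩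
  ext a
  simp only [mem_biUnion, mem_univ, true_and]
  constructor
  · rintro ⟨i, hai⟩
    have hi : i ∈ idx := mem_filter.2 ⟨mem_univ _, a, hai⟩
    exact ⟨e.symm ⟨i, hi⟩, by simpa using hai⟩
  · rintro ⟨j, haj⟩
    exact ⟨_, haj⟩

lemma mem_schreier_of_subset {n : ℕ} {F S : Finset ℕ} (hSF : S ⊆ F) (hF : F ∈ Schreier n) :
    S ∈ Schreier n := by
  induction n generalizing F S with
  | zero => exact (card_le_card hSF).trans hF
  | succ n ih =>
    obtain ⟨k, G, hG, -, hsucc, rfl, hk⟩ := hF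
    have hS : S = univ.biUnion fun i => G i ∩ S := by
      ext a
      simp only [mem_biUnion, mem_univ, true_and, mem_inter]
      exact ⟨fun ha => (mem_biUnion.1 (hSF ha)).elim fun i ⟨_, hi⟩ => ⟨i, hi, ha⟩,
        fun ⟨_, _, ha⟩ => ha⟩
    rw [hS]
    refine biUnion_mem_schreier_succ _ (fun i => ih inter_subset_left (hG i))
      (fun i j hij a ha b hb => hsucc i j hij a (mem_of_mem_inter_left ha) b
        (mem_of_mem_inter_left hb)) fun a ha => hk a (hSF ?_)
    rw [← hS] at ha
    exact ha

lemma singleton_mem_schreier (n : ℕ) {a : ℕ} (ha : 1 ≤ a) : ({a} : Finset ℕ) ∈ Schreier n := by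
  induction n with
  | zero => simp [Schreier]
  | succ n ih =>
    refine ⟨1, fun _ => {a}, fun _ => ih, fun _ => singleton_nonempty a,
      fun i j hij => absurd hij (Subsingleton.elim i j ▸ lt_irrefl j), by simp, ?_⟩
    simpa using ha

lemma pos_of_mem_schreier_succ {n : ℕ} {F : Finset ℕ} (hF : F ∈ Schreier (n + 1)) {a : ℕ}
    (ha : a ∈ F) : 1 ≤ a := by
  obtain ⟨k, G, -, -, -, rfl, hk⟩ := hF
  obtain ⟨i, -, -⟩ := mem_biUnion.1 ha
  exact i.pos.trans_le (hk a ha)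

lemma singleton_mem_schreier_pred {n : ℕ} {F : Finset ℕ} (hF : F ∈ Schreier n) {a : ℕ}
    (ha : a ∈ F) : ({a} : Finset ℕ) ∈ Schreier (n - 1) := by
  cases n with
  | zero => simp [Schreier]
  | succ n => exact singleton_mem_schreier n (pos_of_mem_schreier_succ hF ha)

namespace IsBasicSCC

variable {n : ℕ} {ε : ℝ} {F : Finset ℕ} {c : ℕ → ℝ}

lemma coeff_lt (h : IsBasicSCC n ε F c) {a : ℕ} (ha : a ∈ F) : c a < ε := by
  simpa using h.2.2.2 {a} (singleton_subset_iff.2 ha) (singleton_mem_schreier_pred h.1 ha)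

lemma erase_normalize (h : IsBasicSCC n ε F c) (hε : ε ≤ 1 / 2) {a : ℕ} (ha : a ∈ F) :
    IsBasicSCC n (2 * ε) (F.erase a) fun i => c i / ∑ j ∈ F.erase a, c j := by
  obtain ⟨hF, hc, hsum, hsmall⟩ := h
  set s := ∑ j ∈ F.erase a, c j
  have hca : 0 ≤ c a := hc a ha
  have hca_lt : c a < ε := coeff_lt ⟨hF, hc, hsum, hsmall⟩ ha
  have hs : c a + s = 1 := by rw [add_sum_erase F c ha, hsum]
  have hs_pos : 0 < s := by linarith
  refine ⟨mem_schreier_of_subset (erase_subset a F) hF,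
    fun i hi => div_nonneg (hc i (mem_of_mem_erase hi)) hs_pos.le,
    by rw [← sum_div, div_self hs_pos.ne'], fun G hG hGS => ?_⟩
  have hGε := hsmall G (hG.trans (erase_subset a F)) hGS
  rw [← sum_div, div_lt_iff₀ hs_pos]
  calc ∑ k ∈ G, c k < ε := hGε
    _ = 2 * ε * (1 / 2) := by ring
    _ < 2 * ε * s := by gcongr <;> linarith

end IsBasicSCC

theorem basicSCC_erase_min_general (n : ℕ) (ε : ℝ) (hε : ε < 1 / 2)
    (F : Finset ℕ) (c : ℕ → ℝ) (hne : F.Nonempty)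
    (hscc : IsBasicSCC n ε F c) :
    IsBasicSCC n (2 * ε) (F.erase (F.min' hne))
      (fun i => c i / ∑ j ∈ F.erase (F.min' hne), c j) :=
  hscc.erase_normalize hε.le (F.min'_mem hne)

/-- If `x = ∑_{i∈F} c_i e_i` is an `(n,ε)`-basic s.c.c. with `0 < ε < 1/2`
(and `F` has at least two elements), then removing `min F` and renormalizing
the coefficients by `c_i' = c_i / ∑_{j ∈ F \ {min F}} c_j` yields an
`(n,2ε)`-basic s.c.c. -/
theorem basicSCC_erase_min (n : ℕ) (ε : ℝ) (hε₀ : 0 < ε) (hε : ε < 1 / 2)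
    (F : Finset ℕ) (c : ℕ → ℝ) (hF : 1 < F.card) (hne : F.Nonempty)
    (hscc : IsBasicSCC n ε F c) :
    IsBasicSCC n (2 * ε) (F.erase (F.min' hne))
      (fun i => c i / ∑ j ∈ F.erase (F.min' hne), c j) :=
  basicSCC_erase_min_general n ε hε F c hne hscc
end

section
/- Let (e_k) be a conditional (i.e., not unconditional) spreading Schauder basic sequence in a Banach space, and suppose that the sequence u_k = e_{2k-1} − e_{2k} is equivalent to the unit vector basis of c_0. Then (e_k) is equivalent to the summing basis of c_0. -/
open Filter Topology

variable {X : Type*} [NormedAddCommGroup X] [NormedSpace ℝ X]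

/-- `(e_k)` is a Schauder basic sequence: the vectors are non-zero and the
partial-sum projections are uniformly bounded. -/
def IsBasicSeq (e : ℕ → X) : Prop :=
  (∀ k, e k ≠ 0) ∧ ∃ C : ℝ, 1 ≤ C ∧ ∀ (m n : ℕ), m ≤ n → ∀ a : ℕ → ℝ,
    ‖∑ i ∈ Finset.range m, a i • e i‖ ≤ C * ‖∑ i ∈ Finset.range n, a i • e i‖

/-- `(e_k)` is an unconditional basic sequence: sign changes of coefficients
are uniformly bounded. -/
def IsUnconditionalSeq (e : ℕ → X) : Prop :=
  ∃ C : ℝ, 1 ≤ C ∧ ∀ (n : ℕ) (a ε : ℕ → ℝ), (∀ i, ε i = 1 ∨ ε i = -1) →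
    ‖∑ i ∈ Finset.range n, (ε i * a i) • e i‖ ≤
      C * ‖∑ i ∈ Finset.range n, a i • e i‖

/-- `(e_k)` is spreading: it is uniformly equivalent to all of its
subsequences. -/
def IsSpreadingSeq (e : ℕ → X) : Prop :=
  ∃ C : ℝ, 1 ≤ C ∧ ∀ (k : ℕ → ℕ), StrictMono k → ∀ (n : ℕ) (a : ℕ → ℝ),
    ‖∑ i ∈ Finset.range n, a i • e (k i)‖ ≤
        C * ‖∑ i ∈ Finset.range n, a i • e i‖ ∧
    ‖∑ i ∈ Finset.range n, a i • e i‖ ≤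
        C * ‖∑ i ∈ Finset.range n, a i • e (k i)‖

/-- `(u_k)` is equivalent to the unit vector basis of `c₀`. -/
def EquivC0Basis (u : ℕ → X) : Prop :=
  ∃ C : ℝ, 1 ≤ C ∧ ∀ (n : ℕ) (a : ℕ → ℝ),
    ‖∑ i ∈ Finset.range n, a i • u i‖ ≤ C * (⨆ i ∈ Finset.range n, |a i|) ∧
    (⨆ i ∈ Finset.range n, |a i|) ≤ C * ‖∑ i ∈ Finset.range n, a i • u i‖

/-- `(e_k)` is equivalent to the summing basis of `c₀`: the norm of
`∑ a_k e_k` is equivalent to `sup_m |∑_{k ≤ m} a_k|`. -/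
def EquivSummingBasis (e : ℕ → X) : Prop :=
  ∃ C : ℝ, 1 ≤ C ∧ ∀ (n : ℕ) (a : ℕ → ℝ),
    ‖∑ i ∈ Finset.range n, a i • e i‖ ≤
      C * (⨆ m ∈ Finset.range (n + 1), |∑ i ∈ Finset.range m, a i|) ∧
    (⨆ m ∈ Finset.range (n + 1), |∑ i ∈ Finset.range m, a i|) ≤
      C * ‖∑ i ∈ Finset.range n, a i • e i‖

/-!
If the summing functional `∑ aᵢ eᵢ ↦ ∑ aᵢ` were unbounded, there would be blocks `∑ aᵢ eᵢ` of
arbitrarily small norm with `∑ aᵢ = 1` and all partial sums of `(aᵢ)` in `[-1, 1]`. By spreading,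
`∑ cₖ eₖ` is comparable to `∑ cₖ e_{nk}`, and replacing each `e_{nk}` by a shifted copy of such a
block changes it by a combination of differences `e_j - e_{j+1}` with coefficients bounded by
`2 max |cₖ|`. The even and odd differences are copies of `(u_k)`, so the differences have an upper
`c₀`-estimate, hence so would `(e_k)`, which would make it unconditional. Hence the summing
functional is bounded, which is the lower summing-basis estimate; Abel summation against the
differences gives the upper one.
-/

open Finset

theorem sum_range_mul_eq_sum_sum {M : Type*} [AddCommMonoid M] (f : ℕ → M) (n N : ℕ) :
    ∑ j ∈ range (n * N), f j = ∑ k ∈ range N, ∑ i ∈ range n, f (n * k + i) := by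
  induction N with
  | zero => simp
  | succ N ih => rw [Nat.mul_succ, sum_range_add, ih, sum_range_succ]

section AbelSummation

variable {R M : Type*} [Ring R] [AddCommGroup M] [Module R M]

theorem sum_smul_eq_sum_partialSum_smul_sub (a : ℕ → R) (f : ℕ → M) (n : ℕ) :
    ∑ i ∈ range n, a i • f i =
      ∑ m ∈ range n, (∑ i ∈ range (m + 1), a i) • (f m - f (m + 1)) +
        (∑ i ∈ range n, a i) • f n := by
  induction n with
  | zero => simp
  | succ n ih =>
    rw [sum_range_succ, ih, sum_range_succ (fun m => (∑ i ∈ range (m + 1), a i) • _),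
      sum_range_succ a, smul_sub, add_smul]
    abel

theorem sum_smul_sub_sum_smul_eq (a : ℕ → R) (f : ℕ → M) (n : ℕ) :
    ∑ i ∈ range n, a i • f i - (∑ i ∈ range n, a i) • f 0 =
      ∑ m ∈ range n, (∑ i ∈ range (m + 1), a i - ∑ i ∈ range n, a i) • (f m - f (m + 1)) := by
  have hf0 : f 0 = ∑ m ∈ range n, (f m - f (m + 1)) + f n := by
    rw [sum_range_sub']; abel
  rw [sum_smul_eq_sum_partialSum_smul_sub a f n, hf0, smul_add, smul_sum]
  simp only [sub_smul, sum_sub_distrib]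
  abel

theorem sum_smul_block_sub_eq (a c : ℕ → R) (f : ℕ → M) {n : ℕ} (hn : 0 < n)
    (ha : ∑ i ∈ range n, a i = 1) (N : ℕ) :
    ∑ k ∈ range N, c k • (∑ i ∈ range n, a i • f (n * k + i) - f (n * k)) =
      ∑ j ∈ range (n * N),
        (c (j / n) * (∑ i ∈ range (j % n + 1), a i - 1)) • (f j - f (j + 1)) := by
  rw [sum_range_mul_eq_sum_sum]
  refine sum_congr rfl fun k _ => ?_
  have h := sum_smul_sub_sum_smul_eq a (fun i => f (n * k + i)) n
  simp only [ha, one_smul, add_zero, ← add_assoc] at h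
  rw [h, smul_sum]
  refine sum_congr rfl fun i hi => ?_
  have hi : i < n := mem_range.mp hi
  simp [Nat.mul_add_div hn, Nat.div_eq_of_lt hi, Nat.mod_eq_of_lt hi, smul_smul]

theorem sum_alternating_smul_eq (b : ℕ → R) (f : ℕ → M) (N : ℕ) :
    ∑ i ∈ range (2 * N), ((-1) ^ i * b (i / 2)) • f i =
      ∑ m ∈ range N, b m • (f (2 * m) - f (2 * m + 1)) := by
  rw [sum_range_mul_eq_sum_sum]
  refine sum_congr rfl fun m _ => ?_
  simp [sum_range_succ, pow_succ, pow_mul, sub_eq_add_neg, Nat.mul_add_div]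

end AbelSummation

theorem le_biSup_of_mem {ι : Type*} (s : Finset ι) (g : ι → ℝ) {j : ι} (hj : j ∈ s) :
    g j ≤ ⨆ i ∈ s, g i :=
  le_ciSup₂ (f := fun i (_ : i ∈ s) => g i) ((s.image g).bddAbove.mono fun _ hx => by
    obtain ⟨i, hi, rfl⟩ := by simpa using hx
    exact mem_coe.2 (mem_image_of_mem g hi)) j hj

theorem biSup_le_of_nonneg {ι : Type*} (s : Finset ι) (g : ι → ℝ) {B : ℝ} (hB : 0 ≤ B)
    (h : ∀ i ∈ s, g i ≤ B) : ⨆ i ∈ s, g i ≤ B :=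
  Real.iSup_le (fun i => Real.iSup_le (h i) hB) hB

def HasUpperC0Estimate (d : ℕ → X) (C : ℝ) : Prop :=
  ∀ (n : ℕ) (a : ℕ → ℝ) (B : ℝ), 0 ≤ B → (∀ i < n, |a i| ≤ B) →
    ‖∑ i ∈ range n, a i • d i‖ ≤ C * B

theorem EquivC0Basis.hasUpperC0Estimate {u : ℕ → X} (hu : EquivC0Basis u) :
    ∃ C, HasUpperC0Estimate u C := by
  obtain ⟨C, hC, hCu⟩ := hu
  refine ⟨C, fun n a B hB ha => (hCu n a).1.trans ?_⟩
  gcongr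
  exact biSup_le_of_nonneg _ _ hB fun i hi => ha i (mem_range.mp hi)

theorem HasUpperC0Estimate.of_even_odd {d : ℕ → X} {C C' : ℝ}
    (h₀ : HasUpperC0Estimate (fun m => d (2 * m)) C)
    (h₁ : HasUpperC0Estimate (fun m => d (2 * m + 1)) C') :
    HasUpperC0Estimate d (C + C') := by
  intro n a B hB ha
  set a' : ℕ → ℝ := fun i => if i < n then a i else 0
  have ha' : ∀ i, |a' i| ≤ B := fun i => by
    by_cases hi : i < n
    · simpa [a', hi] using ha i hi
    · simpa [a', hi] using hB
  have hpad : ∑ i ∈ range n, a i • d i = ∑ i ∈ range (2 * n), a' i • d i := by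
    rw [two_mul, sum_range_add]
    simp only [a', add_lt_iff_neg_left, not_lt_zero, if_false, zero_smul, sum_const_zero,
      add_zero]
    exact sum_congr rfl fun i hi => by rw [if_pos (mem_range.mp hi)]
  have hsplit : ∑ i ∈ range (2 * n), a' i • d i =
      ∑ m ∈ range n, a' (2 * m) • d (2 * m) + ∑ m ∈ range n, a' (2 * m + 1) • d (2 * m + 1) := by
    rw [sum_range_mul_eq_sum_sum, ← sum_add_distrib]
    simp [sum_range_succ]
  rw [hpad, hsplit, add_mul]
  exact (norm_add_le _ _).trans (add_le_add (h₀ n _ B hB fun m _ => ha' _)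
    (h₁ n _ B hB fun m _ => ha' _))

section Sequences

variable {e : ℕ → X}

theorem IsSpreadingSeq.hasUpperC0Estimate_odd (hs : IsSpreadingSeq e) {C₀ : ℝ}
    (h : HasUpperC0Estimate (fun m => e (2 * m) - e (2 * m + 1)) C₀) :
    ∃ C, HasUpperC0Estimate (fun m => e (2 * m + 1) - e (2 * m + 1 + 1)) C := by
  obtain ⟨C, hC, hCs⟩ := hs
  refine ⟨C * C₀, fun n b B hB hb => ?_⟩
  have hshift := (hCs (· + 1) (strictMono_id.add_const 1) (2 * n)
    fun i => (-1) ^ i * b (i / 2)).1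
  rw [sum_alternating_smul_eq b (fun i => e (i + 1)),
    sum_alternating_smul_eq b e] at hshift
  calc _ ≤ _ := hshift
    _ ≤ C * (C₀ * B) := by gcongr; exact h n b B hB hb
    _ = C * C₀ * B := by ring

theorem IsSpreadingSeq.hasUpperC0Estimate_sub_succ (hs : IsSpreadingSeq e)
    (hu : EquivC0Basis fun k => e (2 * k) - e (2 * k + 1)) :
    ∃ C, HasUpperC0Estimate (fun j => e j - e (j + 1)) C := by
  obtain ⟨C₀, h₀⟩ := hu.hasUpperC0Estimate
  obtain ⟨C₁, h₁⟩ := hs.hasUpperC0Estimate_odd h₀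
  exact ⟨C₀ + C₁, h₀.of_even_odd h₁⟩

theorem IsSpreadingSeq.exists_norm_le (hs : IsSpreadingSeq e) :
    ∃ C, 0 ≤ C ∧ ∀ j, ‖e j‖ ≤ C * ‖e 0‖ ∧ ‖e 0‖ ≤ C * ‖e j‖ := by
  obtain ⟨C, hC, hCs⟩ := hs
  exact ⟨C, by positivity, fun j => by
    simpa using hCs (· + j) (strictMono_id.add_const j) 1 fun _ => 1⟩

theorem IsBasicSeq.abs_mul_norm_le (hb : IsBasicSeq e) :
    ∃ K, 0 ≤ K ∧ ∀ (N : ℕ) (c : ℕ → ℝ), ∀ k < N,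
      |c k| * ‖e k‖ ≤ K * ‖∑ i ∈ range N, c i • e i‖ := by
  obtain ⟨-, Cb, hCb, hP⟩ := hb
  refine ⟨2 * Cb, by positivity, fun N c k hk => ?_⟩
  have hck : c k • e k = ∑ i ∈ range (k + 1), c i • e i - ∑ i ∈ range k, c i • e i := by
    rw [sum_range_succ, add_sub_cancel_left]
  calc |c k| * ‖e k‖ = ‖c k • e k‖ := by rw [norm_smul, Real.norm_eq_abs]
    _ ≤ ‖∑ i ∈ range (k + 1), c i • e i‖ + ‖∑ i ∈ range k, c i • e i‖ := by
      rw [hck]; exact norm_sub_le _ _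
    _ ≤ Cb * ‖∑ i ∈ range N, c i • e i‖ + Cb * ‖∑ i ∈ range N, c i • e i‖ :=
      add_le_add (hP _ _ hk c) (hP _ _ hk.le c)
    _ = 2 * Cb * ‖∑ i ∈ range N, c i • e i‖ := by ring

theorem IsBasicSeq.exists_abs_le_mul_norm_sum (hb : IsBasicSeq e) (hs : IsSpreadingSeq e) :
    ∃ K, 0 ≤ K ∧ ∀ (N : ℕ) (c : ℕ → ℝ), ∀ k < N, |c k| ≤ K * ‖∑ i ∈ range N, c i • e i‖ := by
  obtain ⟨K, hK, hKc⟩ := hb.abs_mul_norm_le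
  obtain ⟨C, hC, hCe⟩ := hs.exists_norm_le
  have he₀ : 0 < ‖e 0‖ := norm_pos_iff.mpr (hb.1 0)
  refine ⟨C * K / ‖e 0‖, by positivity, fun N c k hk => ?_⟩
  rw [div_mul_eq_mul_div, le_div_iff₀ he₀]
  calc |c k| * ‖e 0‖ ≤ |c k| * (C * ‖e k‖) := by gcongr; exact (hCe k).2
    _ = C * (|c k| * ‖e k‖) := by ring
    _ ≤ C * (K * ‖∑ i ∈ range N, c i • e i‖) := mul_le_mul_of_nonneg_left (hKc N c k hk) hC
    _ = C * K * ‖∑ i ∈ range N, c i • e i‖ := by ring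

def IsSumFunctionalBounded (e : ℕ → X) : Prop :=
  ∃ K, 0 ≤ K ∧ ∀ (n : ℕ) (a : ℕ → ℝ), |∑ i ∈ range n, a i| ≤ K * ‖∑ i ∈ range n, a i • e i‖

theorem IsBasicSeq.exists_small_block (hb : IsBasicSeq e) (h : ¬ IsSumFunctionalBounded e) {δ : ℝ}
    (hδ : 0 < δ) :
    ∃ (n : ℕ) (a : ℕ → ℝ), ∑ i ∈ range n, a i = 1 ∧
      (∀ m ≤ n, |∑ i ∈ range m, a i| ≤ 1) ∧ ‖∑ i ∈ range n, a i • e i‖ ≤ δ := by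
  obtain ⟨-, Cb, hCb, hP⟩ := hb
  obtain ⟨n₀, a₀, hn₀⟩ : ∃ (n₀ : ℕ) (a₀ : ℕ → ℝ), Cb / δ * ‖∑ i ∈ range n₀, a₀ i • e i‖ <
      |∑ i ∈ range n₀, a₀ i| := by
    by_contra! h'
    exact h ⟨Cb / δ, by positivity, h'⟩
  -- normalising by the partial sum of largest modulus puts all partial sums in `[-1, 1]`
  obtain ⟨n, hn, hmax⟩ := (range (n₀ + 1)).exists_max_image (fun m => |∑ i ∈ range m, a₀ i|)
    ⟨0, by simp⟩
  set c := ∑ i ∈ range n, a₀ i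
  have hc : |∑ i ∈ range n₀, a₀ i| ≤ |c| := hmax n₀ (self_mem_range_succ n₀)
  have hc₀ : 0 < |c| := (hn₀.trans_le' (by positivity)).trans_le hc
  refine ⟨n, fun i => a₀ i / c, ?_, fun m hm => ?_, ?_⟩
  · rw [← sum_div, div_self (abs_pos.mp hc₀)]
  · rw [← sum_div, abs_div, div_le_one hc₀]
    exact hmax m (mem_range.mpr (by have := mem_range.mp hn; omega))
  · have hn' : n ≤ n₀ := Nat.lt_succ_iff.mp (mem_range.mp hn)
    have hS : ‖∑ i ∈ range n, a₀ i • e i‖ ≤ |c| * δ :=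
      calc _ ≤ Cb * ‖∑ i ∈ range n₀, a₀ i • e i‖ := hP n n₀ hn' a₀
        _ = Cb / δ * ‖∑ i ∈ range n₀, a₀ i • e i‖ * δ := by field_simp
        _ ≤ |c| * δ := by gcongr; exact hn₀.le.trans hc
    simp only [div_eq_inv_mul, ← smul_smul, ← smul_sum]
    rwa [norm_smul, Real.norm_eq_abs, abs_inv, inv_mul_le_iff₀ hc₀]

theorem IsSpreadingSeq.hasUpperC0Estimate_of_small_blocks (hs : IsSpreadingSeq e) {C₂ : ℝ}
    (hd : HasUpperC0Estimate (fun j => e j - e (j + 1)) C₂)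
    (hblock : ∀ δ > 0, ∃ (n : ℕ) (a : ℕ → ℝ), ∑ i ∈ range n, a i = 1 ∧
      (∀ m ≤ n, |∑ i ∈ range m, a i| ≤ 1) ∧ ‖∑ i ∈ range n, a i • e i‖ ≤ δ) :
    ∃ C, HasUpperC0Estimate e C := by
  obtain ⟨C, hC, hCs⟩ := hs
  refine ⟨C * (1 + 2 * C₂), fun N c M hM hc => ?_⟩
  obtain ⟨n, a, ha, hpart, hsmall⟩ := hblock (N * C + 1)⁻¹ (by positivity)
  have hn : 0 < n := Nat.pos_of_ne_zero (by rintro rfl; simp at ha)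
  set x : ℕ → X := fun k => ∑ i ∈ range n, a i • e (n * k + i)
  have hx : ∀ k, ‖x k‖ ≤ C * (N * C + 1)⁻¹ := fun k =>
    (hCs (n * k + ·) (strictMono_id.const_add _) n a).1.trans (by gcongr)
  have hmain : ‖∑ k ∈ range N, c k • x k‖ ≤ M := calc
    _ ≤ ∑ k ∈ range N, M * (C * (N * C + 1)⁻¹) := by
      refine (norm_sum_le _ _).trans (sum_le_sum fun k hk => ?_)
      rw [norm_smul, Real.norm_eq_abs]
      exact mul_le_mul (hc k (mem_range.mp hk)) (hx k) (norm_nonneg _) hM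
    _ = M * (N * C / (N * C + 1)) := by rw [sum_const, card_range, nsmul_eq_mul]; ring
    _ ≤ M := mul_le_of_le_one_right hM ((div_le_one (by positivity)).mpr (by linarith))
  have hrest : ‖∑ k ∈ range N, c k • (x k - e (n * k))‖ ≤ C₂ * (2 * M) := by
    rw [sum_smul_block_sub_eq a c e hn ha]
    refine hd _ _ _ (by positivity) fun j hj => ?_
    have hA : |∑ i ∈ range (j % n + 1), a i - 1| ≤ 2 := by
      linarith [abs_sub (∑ i ∈ range (j % n + 1), a i) 1, abs_one (α := ℝ),
        hpart _ (Nat.mod_lt j hn)]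
    rw [abs_mul, mul_comm 2 M]
    exact mul_le_mul (hc _ (Nat.div_lt_of_lt_mul hj)) hA (abs_nonneg _) hM
  calc ‖∑ k ∈ range N, c k • e k‖ ≤ C * ‖∑ k ∈ range N, c k • e (n * k)‖ :=
        (hCs (n * ·) (strictMono_mul_left_of_pos hn) N c).2
    _ = C * ‖∑ k ∈ range N, c k • x k - ∑ k ∈ range N, c k • (x k - e (n * k))‖ := by
        simp only [smul_sub, sum_sub_distrib, sub_sub_cancel]
    _ ≤ C * (M + C₂ * (2 * M)) := by
        gcongr; exact (norm_sub_le _ _).trans (add_le_add hmain hrest)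
    _ = C * (1 + 2 * C₂) * M := by ring

theorem isUnconditionalSeq_of_hasUpperC0Estimate {K C : ℝ} (hK : 0 ≤ K)
    (hKc : ∀ (N : ℕ) (c : ℕ → ℝ), ∀ k < N, |c k| ≤ K * ‖∑ i ∈ range N, c i • e i‖)
    (hC : HasUpperC0Estimate e C) : IsUnconditionalSeq e := by
  refine ⟨max 1 (C * K), le_max_left _ _, fun N c ε hε => ?_⟩
  have hεc : ∀ k < N, |ε k * c k| ≤ K * ‖∑ i ∈ range N, c i • e i‖ := fun k hk => by
    rcases hε k with h | h <;> simpa [h] using hKc N c k hk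
  calc _ ≤ C * (K * ‖∑ i ∈ range N, c i • e i‖) := hC N _ _ (by positivity) hεc
    _ = C * K * ‖∑ i ∈ range N, c i • e i‖ := by ring
    _ ≤ _ := by gcongr; exact le_max_right _ _

theorem isSumFunctionalBounded_of_not_isUnconditionalSeq (hb : IsBasicSeq e)
    (hs : IsSpreadingSeq e) (hcond : ¬ IsUnconditionalSeq e) {C₂ : ℝ}
    (hd : HasUpperC0Estimate (fun j => e j - e (j + 1)) C₂) : IsSumFunctionalBounded e := by
  by_contra h
  obtain ⟨C, hC⟩ := hs.hasUpperC0Estimate_of_small_blocks hd fun _ hδ => hb.exists_small_block h hδ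
  obtain ⟨K, hK, hKc⟩ := hb.exists_abs_le_mul_norm_sum hs
  exact hcond (isUnconditionalSeq_of_hasUpperC0Estimate hK hKc hC)

theorem norm_sum_smul_le_of_hasUpperC0Estimate_sub_succ {C D : ℝ}
    (hd : HasUpperC0Estimate (fun j => e j - e (j + 1)) C) {n : ℕ} (hn : ‖e n‖ ≤ D)
    (a : ℕ → ℝ) :
    ‖∑ i ∈ range n, a i • e i‖ ≤ (C + D) * ⨆ m ∈ range (n + 1), |∑ i ∈ range m, a i| := by
  have hS : ∀ m ∈ range (n + 1),
      |∑ i ∈ range m, a i| ≤ ⨆ m ∈ range (n + 1), |∑ i ∈ range m, a i| :=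
    fun m hm => le_biSup_of_mem _ (fun m => |∑ i ∈ range m, a i|) hm
  have hS₀ := (abs_nonneg _).trans (hS n (self_mem_range_succ n))
  rw [sum_smul_eq_sum_partialSum_smul_sub, add_mul]
  refine (norm_add_le _ _).trans (add_le_add (hd n _ _ hS₀ fun m hm => hS _ ?_) ?_)
  · simpa using hm
  · rw [norm_smul, Real.norm_eq_abs, mul_comm]
    exact mul_le_mul hn (hS n (self_mem_range_succ n)) (abs_nonneg _) ((norm_nonneg _).trans hn)

theorem IsSumFunctionalBounded.biSup_abs_le (h : IsSumFunctionalBounded e) (hb : IsBasicSeq e) :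
    ∃ K, ∀ (n : ℕ) (a : ℕ → ℝ),
      ⨆ m ∈ range (n + 1), |∑ i ∈ range m, a i| ≤ K * ‖∑ i ∈ range n, a i • e i‖ := by
  obtain ⟨K, hK, hKe⟩ := h
  obtain ⟨-, Cb, hCb, hP⟩ := hb
  refine ⟨K * Cb, fun n a => biSup_le_of_nonneg _ _
    (mul_nonneg (mul_nonneg hK (by linarith)) (norm_nonneg _)) fun m hm => ?_⟩
  calc _ ≤ K * ‖∑ i ∈ range m, a i • e i‖ := hKe m a
    _ ≤ K * (Cb * ‖∑ i ∈ range n, a i • e i‖) :=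
      mul_le_mul_of_nonneg_left (hP m n (Nat.lt_succ_iff.mp (mem_range.mp hm)) a) hK
    _ = K * Cb * ‖∑ i ∈ range n, a i • e i‖ := by ring

end Sequences

theorem conditional_spreading_with_c0_differences_is_summing_general
    (e : ℕ → X)
    (hbasic : IsBasicSeq e) (hspread : IsSpreadingSeq e)
    (hcond : ¬ IsUnconditionalSeq e)
    (hu : EquivC0Basis fun k => e (2 * k) - e (2 * k + 1)) :
    EquivSummingBasis e := by
  obtain ⟨C₂, hd⟩ := hspread.hasUpperC0Estimate_sub_succ hu
  obtain ⟨K, hlower⟩ := (isSumFunctionalBounded_of_not_isUnconditionalSeq hbasic hspread hcond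
    hd).biSup_abs_le hbasic
  obtain ⟨D, -, hD⟩ := hspread.exists_norm_le
  refine ⟨max 1 (max (C₂ + D * ‖e 0‖) K), le_max_left _ _, fun n a => ⟨?_, ?_⟩⟩
  · refine (norm_sum_smul_le_of_hasUpperC0Estimate_sub_succ hd (hD n).1 a).trans ?_
    exact mul_le_mul_of_nonneg_right (le_max_of_le_right (le_max_left _ _))
      (Real.iSup_nonneg fun _ => Real.iSup_nonneg fun _ => abs_nonneg _)
  · exact (hlower n a).trans (mul_le_mul_of_nonneg_right
      (le_max_of_le_right (le_max_right _ _)) (norm_nonneg _))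

/-- A conditional (non-unconditional) spreading Schauder basic sequence whose
differences `u_k = e_{2k-1} - e_{2k}` are equivalent to the unit vector basis
of `c₀` is itself equivalent to the summing basis of `c₀`. -/
theorem conditional_spreading_with_c0_differences_is_summing
    [CompleteSpace X] (e : ℕ → X)
    (hbasic : IsBasicSeq e) (hspread : IsSpreadingSeq e)
    (hcond : ¬ IsUnconditionalSeq e)
    (hu : EquivC0Basis fun k => e (2 * k) - e (2 * k + 1)) :
    EquivSummingBasis e :=
  conditional_spreading_with_c0_differences_is_summing_general e hbasic hspread hcond hu
end

section
/- Let (e_k) be a 1-spreading Schauder basic sequence and (z_k) an absolutely convex block sequence of (e_k). Then for every ε > 0, (z_k) has a subsequence which is (1+ε)-dominated by (e_k): ‖Σ a_k z_{k_j}‖ ≤ (1+ε)‖Σ a_j e_j‖ for all finitely supported scalar sequences (a_j). -/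
variable {X : Type*} [NormedAddCommGroup X] [NormedSpace ℝ X]

/-- `(e_k)` is 1-spreading. -/
def OneSpreading (e : ℕ → X) : Prop :=
  ∀ (n : ℕ) (p : ℕ → ℕ), StrictMono p → ∀ a : ℕ → ℝ,
    ‖∑ k ∈ Finset.range n, a k • e (p k)‖ = ‖∑ k ∈ Finset.range n, a k • e k‖

/-- `(z_k)` is an absolutely convex block sequence of `(e_k)`:
`z_k = ∑_{i ∈ F_k} c_i e_i` with `F_1 < F_2 < ⋯` successive finite sets and
`∑_{i ∈ F_k} |c_i| = 1`. -/
def IsAbsConvexBlockSeq (e z : ℕ → X) : Prop :=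
  ∃ (F : ℕ → Finset ℕ) (c : ℕ → ℝ),
    (∀ k, (F k).Nonempty) ∧
    (∀ k l, k < l → ∀ a ∈ F k, ∀ b ∈ F l, a < b) ∧
    (∀ k, ∑ i ∈ F k, |c i| = 1) ∧
    (∀ k, z k = ∑ i ∈ F k, c i • e i)

/-! Each block splits into its positive and negative parts, `z_k = λ_k u_k - (1 - λ_k) v_k`, where
`λ_k` is the positive mass of `z_k` and `u_k`, `v_k` are convex blocks of `(e_k)`. Convex blocks are
`1`-dominated by `(e_k)`: `(x_j) ↦ ‖∑ a_j x_j‖` is convex, so on a product of convex hulls it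
is maximal at a point `(e_{q_j})` with `q` increasing, where spreading evaluates it. Along a
subsequence on which `λ_k → λ` geometrically fast, replacing `λ_k` by `λ` costs little, because
the basis constant bounds every `‖a_j e_j‖` by `2C ‖∑ a_i e_i‖`. -/

open Finset

theorem exists_sum_smul_eq_sum_smul_mem_convexHull {𝕜 ι E : Type*} [Field 𝕜] [LinearOrder 𝕜]
    [IsStrictOrderedRing 𝕜] [AddCommGroup E] [Module 𝕜 E] {s : Finset ι} (hs : s.Nonempty)
    {w : ι → 𝕜} (hw : ∀ i ∈ s, 0 ≤ w i) (v : ι → E) :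
    ∃ u ∈ convexHull 𝕜 (v '' s), ∑ i ∈ s, w i • v i = (∑ i ∈ s, w i) • u := by
  rcases (sum_nonneg hw).eq_or_lt with h | h
  · obtain ⟨i, hi⟩ := hs
    refine ⟨v i, subset_convexHull 𝕜 _ ⟨i, hi, rfl⟩, ?_⟩
    rw [← h, zero_smul]
    exact sum_eq_zero fun j hj => by
      rw [(sum_eq_zero_iff_of_nonneg hw).1 h.symm j hj, zero_smul]
  · refine ⟨s.centerMass w v, s.centerMass_mem_convexHull hw h fun i hi => ⟨i, hi, rfl⟩, ?_⟩
    rw [centerMass, smul_smul, mul_inv_cancel₀ h.ne', one_smul]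

theorem exists_sum_smul_eq_posPart_smul_sub {ι E : Type*} [AddCommGroup E] [Module ℝ E]
    {s : Finset ι} (hs : s.Nonempty) {c : ι → ℝ} (hc : ∑ i ∈ s, |c i| = 1) (v : ι → E) :
    ∃ u ∈ convexHull ℝ (v '' s), ∃ w ∈ convexHull ℝ (v '' s),
      ∑ i ∈ s, c i • v i = (∑ i ∈ s, (c i)⁺) • u - (1 - ∑ i ∈ s, (c i)⁺) • w := by
  obtain ⟨u, hu, hpos⟩ :=
    exists_sum_smul_eq_sum_smul_mem_convexHull hs (fun i _ => posPart_nonneg (c i)) v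
  obtain ⟨w, hw, hneg⟩ :=
    exists_sum_smul_eq_sum_smul_mem_convexHull hs (fun i _ => negPart_nonneg (c i)) v
  have hmass : ∑ i ∈ s, (c i)⁻ = 1 - ∑ i ∈ s, (c i)⁺ := by
    rw [← hc, eq_sub_iff_add_eq, ← sum_add_distrib]
    exact sum_congr rfl fun i _ => by rw [add_comm, posPart_add_negPart]
  refine ⟨u, hu, w, hw, ?_⟩
  rw [← hpos, ← hmass, ← hneg, ← sum_sub_distrib]
  exact sum_congr rfl fun i _ => by rw [← sub_smul, posPart_sub_negPart]

theorem sum_posPart_mem_Icc {ι : Type*} {s : Finset ι} {c : ι → ℝ} (hc : ∑ i ∈ s, |c i| = 1) :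
    ∑ i ∈ s, (c i)⁺ ∈ Set.Icc (0 : ℝ) 1 :=
  ⟨sum_nonneg fun i _ => posPart_nonneg _, hc ▸ sum_le_sum fun i _ => by
    rw [← posPart_add_negPart]; exact le_add_of_nonneg_right (negPart_nonneg _)⟩

theorem norm_sum_mul_smul_le {E : Type*} [SeminormedAddCommGroup E] [NormedSpace ℝ E]
    (s : Finset ℕ) (w a : ℕ → ℝ) (x : ℕ → E) (t : ℝ) :
    ‖∑ j ∈ s, (w j * a j) • x j‖ ≤
      |t| * ‖∑ j ∈ s, a j • x j‖ + ∑ j ∈ s, |w j - t| * ‖a j • x j‖ := by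
  have hsplit : ∑ j ∈ s, (w j * a j) • x j =
      t • ∑ j ∈ s, a j • x j + ∑ j ∈ s, (w j - t) • a j • x j := by
    rw [smul_sum, ← sum_add_distrib]
    exact sum_congr rfl fun j _ => by module
  calc ‖∑ j ∈ s, (w j * a j) • x j‖
      ≤ ‖t • ∑ j ∈ s, a j • x j‖ + ‖∑ j ∈ s, (w j - t) • a j • x j‖ :=
        hsplit ▸ norm_add_le _ _
    _ ≤ |t| * ‖∑ j ∈ s, a j • x j‖ + ∑ j ∈ s, |w j - t| * ‖a j • x j‖ := by
        rw [norm_smul, Real.norm_eq_abs]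
        gcongr
        exact (norm_sum_le _ _).trans_eq
          (sum_congr rfl fun j _ => by rw [norm_smul, Real.norm_eq_abs])

theorem sum_range_mul_le_of_le_geometric {d b : ℕ → ℝ} {η B : ℝ} {n : ℕ}
    (hd0 : ∀ j, 0 ≤ d j) (hd : ∀ j, d j ≤ η * (1 / 2) ^ j) (hb : ∀ j < n, b j ≤ B) (hB : 0 ≤ B) :
    ∑ j ∈ range n, d j * b j ≤ 2 * η * B := by
  have hη : 0 ≤ η := by simpa using (hd0 0).trans (hd 0)
  calc ∑ j ∈ range n, d j * b j ≤ ∑ j ∈ range n, η * (1 / 2) ^ j * B :=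
        sum_le_sum fun j hj => (mul_le_mul_of_nonneg_left (hb j (mem_range.1 hj)) (hd0 j)).trans
          (mul_le_mul_of_nonneg_right (hd j) hB)
    _ = η * B * ∑ j ∈ range n, (1 / 2 : ℝ) ^ j := by
        rw [mul_sum]; exact sum_congr rfl fun j _ => by ring
    _ ≤ η * B * 2 := by
        gcongr
        exact sum_geometric_two_le n
    _ = 2 * η * B := by ring

theorem IsCompact.exists_subseq_dist_lt {Y : Type*} [PseudoMetricSpace Y] {s : Set Y}
    (hs : IsCompact s) {x : ℕ → Y} (hx : ∀ n, x n ∈ s) {δ : ℕ → ℝ} (hδ : ∀ j, 0 < δ j) :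
    ∃ y ∈ s, ∃ φ : ℕ → ℕ, StrictMono φ ∧ ∀ j, dist (x (φ j)) y < δ j := by
  obtain ⟨y, hy, φ, hφ, hlim⟩ := hs.tendsto_subseq hx
  obtain ⟨ψ, hψ, hclose⟩ :=
    Filter.extraction_forall_of_eventually fun j => Metric.tendsto_nhds.1 hlim (δ j) (hδ j)
  exact ⟨y, hy, φ ∘ ψ, hφ.comp hψ, hclose⟩

theorem IsBasicSeq.exists_norm_smul_le {e : ℕ → X} (he : IsBasicSeq e) :
    ∃ K, 0 < K ∧ ∀ (n : ℕ) (a : ℕ → ℝ), ∀ j < n,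
      ‖a j • e j‖ ≤ K * ‖∑ i ∈ range n, a i • e i‖ := by
  obtain ⟨-, C, hC1, hC⟩ := he
  refine ⟨2 * C, by linarith, fun n a j hj => ?_⟩
  calc ‖a j • e j‖ = ‖∑ i ∈ range (j + 1), a i • e i - ∑ i ∈ range j, a i • e i‖ := by
        rw [sum_range_succ, add_sub_cancel_left]
    _ ≤ C * ‖∑ i ∈ range n, a i • e i‖ + C * ‖∑ i ∈ range n, a i • e i‖ :=
        (norm_sub_le _ _).trans (add_le_add (hC _ _ hj a) (hC _ _ hj.le a))
    _ = 2 * C * ‖∑ i ∈ range n, a i • e i‖ := by ring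

theorem OneSpreading.norm_sum_le_of_mem_convexHull {e : ℕ → X} (he : OneSpreading e)
    {G : ℕ → Finset ℕ} (hG : ∀ k l, k < l → ∀ a ∈ G k, ∀ b ∈ G l, a < b)
    {u : ℕ → X} (hu : ∀ j, u j ∈ convexHull ℝ (e '' G j)) (n : ℕ) (a : ℕ → ℝ) :
    ‖∑ j ∈ range n, a j • u j‖ ≤ ‖∑ j ∈ range n, a j • e j‖ := by
  let L : (Fin n → X) →ₗ[ℝ] X := ∑ j : Fin n, a j • LinearMap.proj (R := ℝ) (φ := fun _ => X) j
  have hL : ∀ x, L x = ∑ j : Fin n, a j • x j := fun x => by simp [L]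
  have hx : (fun j : Fin n => u j) ∈ convexHull ℝ (Set.univ.pi fun j : Fin n => e '' G j) := by
    rw [convexHull_pi]
    exact fun j _ => hu j
  obtain ⟨y, hy, hxy⟩ := (convexOn_univ_norm.comp_linearMap L).exists_ge_of_mem_convexHull
    (Set.subset_univ _) hx
  choose q hqG hq using fun j : Fin n => hy j (Set.mem_univ j)
  have hne : ∀ j, (G j).Nonempty := fun j => by
    simpa using (convexHull_nonempty_iff (𝕜 := ℝ)).1 ⟨u j, hu j⟩
  let p : ℕ → ℕ := fun j => if h : j < n then q ⟨j, h⟩ else (G j).min' (hne j)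
  have hpG : ∀ j, p j ∈ G j := fun j => by
    by_cases h : j < n
    · simpa [p, h] using hqG ⟨j, h⟩
    · simpa [p, h] using (G j).min'_mem (hne j)
  have hp : StrictMono p := fun i j hij => hG i j hij _ (hpG i) _ (hpG j)
  calc ‖∑ j ∈ range n, a j • u j‖ = ‖L fun j => u j‖ := by
        rw [hL, Fin.sum_univ_eq_sum_range fun j => a j • u j]
    _ ≤ ‖L y‖ := hxy
    _ = ‖∑ j ∈ range n, a j • e (p j)‖ := by
        rw [hL, ← Fin.sum_univ_eq_sum_range fun j => a j • e (p j)]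
        congr 1
        exact Fintype.sum_congr _ _ fun j => by simp [p, hq]
    _ = ‖∑ j ∈ range n, a j • e j‖ := he n p hp a

theorem OneSpreading.norm_sum_smul_sub_smul_le {e : ℕ → X} (he : OneSpreading e)
    {G : ℕ → Finset ℕ} (hG : ∀ k l, k < l → ∀ a ∈ G k, ∀ b ∈ G l, a < b) {u v : ℕ → X}
    (hu : ∀ j, u j ∈ convexHull ℝ (e '' G j)) (hv : ∀ j, v j ∈ convexHull ℝ (e '' G j))
    {p : ℕ → ℝ} {t : ℝ} (ht : t ∈ Set.Icc (0 : ℝ) 1) (n : ℕ) (a : ℕ → ℝ) :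
    ‖∑ j ∈ range n, a j • (p j • u j - (1 - p j) • v j)‖ ≤
      ‖∑ j ∈ range n, a j • e j‖ + 2 * ∑ j ∈ range n, |p j - t| * ‖a j • e j‖ :=
  calc ‖∑ j ∈ range n, a j • (p j • u j - (1 - p j) • v j)‖
      = ‖∑ j ∈ range n, (p j * a j) • u j - ∑ j ∈ range n, ((1 - p j) * a j) • v j‖ := by
        simp only [smul_sub, mul_comm _ (a _), mul_smul, sum_sub_distrib]
    _ ≤ ‖∑ j ∈ range n, (p j * a j) • e j‖ + ‖∑ j ∈ range n, ((1 - p j) * a j) • e j‖ :=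
        norm_sub_le_of_le (he.norm_sum_le_of_mem_convexHull hG hu n _)
          (he.norm_sum_le_of_mem_convexHull hG hv n _)
    _ ≤ (|t| * ‖∑ j ∈ range n, a j • e j‖ + ∑ j ∈ range n, |p j - t| * ‖a j • e j‖) +
          (|1 - t| * ‖∑ j ∈ range n, a j • e j‖ +
            ∑ j ∈ range n, |(1 - p j) - (1 - t)| * ‖a j • e j‖) :=
        add_le_add (norm_sum_mul_smul_le _ _ _ _ _) (norm_sum_mul_smul_le _ _ _ _ _)
    _ = ‖∑ j ∈ range n, a j • e j‖ + 2 * ∑ j ∈ range n, |p j - t| * ‖a j • e j‖ := by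
        rw [abs_of_nonneg ht.1, abs_of_nonneg (sub_nonneg.2 ht.2)]
        simp only [sub_sub_sub_cancel_left, abs_sub_comm t]
        ring

/-- An absolutely convex block sequence of a 1-spreading Schauder basic
sequence has, for every `ε > 0`, a subsequence which is `(1+ε)`-dominated by
the original sequence. -/
theorem absConvexBlock_subseq_dominated (e z : ℕ → X)
    (hbasic : IsBasicSeq e) (he : OneSpreading e)
    (hz : IsAbsConvexBlockSeq e z) (ε : ℝ) (hε : 0 < ε) :
    ∃ φ : ℕ → ℕ, StrictMono φ ∧ ∀ (n : ℕ) (a : ℕ → ℝ),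
      ‖∑ j ∈ Finset.range n, a j • z (φ j)‖ ≤
        (1 + ε) * ‖∑ j ∈ Finset.range n, a j • e j‖ := by
  obtain ⟨F, c, hne, hord, hsum, hzF⟩ := hz
  obtain rfl : z = _ := funext hzF
  obtain ⟨K, hK, hcoef⟩ := hbasic.exists_norm_smul_le
  obtain ⟨t, ht, φ, hφ, hpt⟩ := isCompact_Icc.exists_subseq_dist_lt
    (fun k => sum_posPart_mem_Icc (hsum k)) (δ := fun j => ε / (4 * K) * (1 / 2) ^ j)
    fun j => by positivity
  choose u hu v hv huv using fun k => exists_sum_smul_eq_posPart_smul_sub (hne k) (hsum k) e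
  refine ⟨φ, hφ, fun n a => ?_⟩
  set S := ∑ j ∈ range n, a j • e j
  calc ‖∑ j ∈ range n, a j • ∑ i ∈ F (φ j), c i • e i‖
      = ‖∑ j ∈ range n, a j • ((∑ i ∈ F (φ j), (c i)⁺) • u (φ j)
          - (1 - ∑ i ∈ F (φ j), (c i)⁺) • v (φ j))‖ := by simp only [huv]
    _ ≤ ‖S‖ + 2 * ∑ j ∈ range n, |∑ i ∈ F (φ j), (c i)⁺ - t| * ‖a j • e j‖ :=
        he.norm_sum_smul_sub_smul_le (fun k l hkl => hord _ _ (hφ hkl)) (fun j => hu _)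
          (fun j => hv _) ht n a
    _ ≤ ‖S‖ + 2 * (2 * (ε / (4 * K)) * (K * ‖S‖)) := by
        gcongr
        exact sum_range_mul_le_of_le_geometric (fun j => abs_nonneg _) (fun j => (hpt j).le)
          (hcoef n a) (by positivity)
    _ = (1 + ε) * ‖S‖ := by field_simp; ring
end

section
/- Let S be a non-zero strictly singular bounded operator on an infinite dimensional complex Banach space X such that S² is compact. Then S admits a non-trivial closed hyperinvariant subspace. -/
/-!
Every operator commuting with `S` commutes with `K = S ^ 2`, so a hyperinvariant subspace of `K`
is one of `S`; and if `K = 0`, then `ker S ⊇ range S` is one. A compact `K ≠ 0` on an infinite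
dimensional space has one (Lomonosov). If its spectral radius is positive, a nonzero point of the
spectrum is an eigenvalue, and the eigenspace is hyperinvariant and proper because `μ • 1` is not
compact. If `K` is quasinilpotent we follow Hilden: were all orbits `{T y | T K = K T}` of nonzero
`y` dense, then, since the compact set `closure (K '' ball x₀ 1)` avoids `0`, finitely many
commuting `T` of norm `≤ M` would bring every `K z` with `z ∈ ball x₀ 1` back into that ball.
Iterating gives `Q` of norm `≤ M ^ k` with `Q (K ^ k x₀) ∈ ball x₀ 1`, hence
`‖x₀‖ - 1 ≤ M ^ k ‖K ^ k‖ ‖x₀‖`, which tends to `0` by Gelfand's formula.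
-/

open Filter Topology Metric

variable {X : Type*} [NormedAddCommGroup X] [NormedSpace ℂ X]

/-- `S` is strictly singular: its restriction to any infinite dimensional
closed subspace is not an isomorphism onto its image (not bounded below). -/
def StrictlySingular (S : X →L[ℂ] X) : Prop :=
  ∀ Y : Submodule ℂ X, IsClosed (Y : Set X) → ¬ FiniteDimensional ℂ Y →
    ¬ ∃ c : ℝ, 0 < c ∧ ∀ y ∈ Y, c * ‖y‖ ≤ ‖S y‖

theorem ContinuousLinearMap.exists_lt_norm_apply {𝕜 E F : Type*} [NontriviallyNormedField 𝕜]
    [NormedAddCommGroup E] [NormedSpace 𝕜 E] [NormedAddCommGroup F] [NormedSpace 𝕜 F]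
    {f : E →L[𝕜] F} (hf : f ≠ 0) (r : ℝ) : ∃ x, r < ‖f x‖ := by
  obtain ⟨x, hx⟩ := DFunLike.ne_iff.1 hf
  obtain ⟨c, hc⟩ := NormedField.exists_lt_norm 𝕜 (r / ‖f x‖)
  refine ⟨c • x, ?_⟩
  rw [map_smul, norm_smul]
  exact (div_lt_iff₀ (norm_pos_iff.2 hx)).1 hc

theorem spectrum.tendsto_pow_mul_norm_pow_of_spectralRadius_eq_zero {A : Type*} [NormedRing A]
    [NormedAlgebra ℂ A] [CompleteSpace A] {a : A} (ha : spectralRadius ℂ a = 0) (M : ℝ) :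
    Tendsto (fun n : ℕ => M ^ n * ‖a ^ n‖) atTop (𝓝 0) := by
  set r := (2 * (|M| + 1))⁻¹
  have hr : 0 < r := by positivity
  have hroot : ∀ᶠ n : ℕ in atTop, ‖a ^ n‖ ^ (1 / n : ℝ) < r := by
    have hgelfand := spectrum.pow_norm_pow_one_div_tendsto_nhds_spectralRadius a
    rw [ha] at hgelfand
    filter_upwards [hgelfand.eventually (gt_mem_nhds (ENNReal.ofReal_pos.2 hr))] with n hn
    exact (ENNReal.ofReal_lt_ofReal_iff hr).1 hn
  have hbound : ∀ᶠ n : ℕ in atTop, ‖M ^ n * ‖a ^ n‖‖ ≤ (1 / 2) ^ n := by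
    filter_upwards [hroot, eventually_ne_atTop 0] with n hn hn0
    have hpow : ‖a ^ n‖ ≤ r ^ n := by
      rw [one_div] at hn
      rw [← Real.rpow_inv_natCast_pow (norm_nonneg (a ^ n)) hn0]
      gcongr
    have hMr : |M| * r ≤ 1 / 2 := by
      rw [← div_eq_mul_inv, div_le_iff₀ (by positivity)]
      linarith
    calc ‖M ^ n * ‖a ^ n‖‖ = |M| ^ n * ‖a ^ n‖ := by
          rw [norm_mul, norm_pow, Real.norm_eq_abs, norm_norm]
      _ ≤ |M| ^ n * r ^ n := by gcongr
      _ = (|M| * r) ^ n := (mul_pow _ _ _).symm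
      _ ≤ (1 / 2) ^ n := by gcongr
  exact squeeze_zero_norm' hbound
    (tendsto_pow_atTop_nhds_zero_of_lt_one (by norm_num) (by norm_num))

theorem IsCompactOperator.ne_smul_one {K : X →L[ℂ] X} (hK : IsCompactOperator K)
    (hinf : ¬ FiniteDimensional ℂ X) {μ : ℂ} (hμ : μ ≠ 0) : K ≠ μ • 1 := by
  rintro rfl
  refine hinf (FiniteDimensional.of_isCompactOperator_id (𝕜 := ℂ) ?_)
  simpa [smul_smul, inv_mul_cancel₀ hμ] using hK.smul μ⁻¹

theorem Commute.apply_apply {T S : X →L[ℂ] X} (h : Commute T S) (x : X) : T (S x) = S (T x) := by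
  simpa only [mul_apply_eq_comp] using congr($h.eq x)

def HasHyperinvariantSubspace (S : X →L[ℂ] X) : Prop :=
  ∃ Y : Submodule ℂ X, IsClosed (Y : Set X) ∧ Y ≠ ⊥ ∧ Y ≠ ⊤ ∧
    ∀ T : X →L[ℂ] X, Commute T S → ∀ x ∈ Y, T x ∈ Y

namespace HasHyperinvariantSubspace

variable {S : X →L[ℂ] X}

theorem of_pow {n : ℕ} (h : HasHyperinvariantSubspace (S ^ n)) : HasHyperinvariantSubspace S :=
  let ⟨Y, hY, hbot, htop, hinv⟩ := h
  ⟨Y, hY, hbot, htop, fun T hT => hinv T (hT.pow_right n)⟩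

theorem of_sq_eq_zero (hS : S ≠ 0) (hS2 : S ^ 2 = 0) : HasHyperinvariantSubspace S := by
  refine ⟨LinearMap.ker (S : X →ₗ[ℂ] X), S.isClosed_ker, ?_, ?_, ?_⟩
  · obtain ⟨x, hx⟩ := DFunLike.ne_iff.1 hS
    exact (Submodule.ne_bot_iff _).2 ⟨S x, by simpa [sq] using congr($hS2 x), hx⟩
  · rwa [Ne, LinearMap.ker_eq_top, ← ContinuousLinearMap.toLinearMap_zero,
      ContinuousLinearMap.coe_inj]
  · intro T hT x hx
    rw [LinearMap.mem_ker, ContinuousLinearMap.coe_coe] at hx ⊢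
    rw [← hT.apply_apply, hx, map_zero]

theorem of_hasEigenvalue {μ : ℂ} (hμ : Module.End.HasEigenvalue (S : Module.End ℂ X) μ)
    (hS : S ≠ μ • 1) : HasHyperinvariantSubspace S := by
  set E : X →L[ℂ] X := S - μ • 1
  have hmem (x : X) : x ∈ LinearMap.ker (E : X →ₗ[ℂ] X) ↔ S x = μ • x := by
    simp [E, sub_eq_zero]
  refine ⟨LinearMap.ker (E : X →ₗ[ℂ] X), E.isClosed_ker, ?_, ?_, ?_⟩
  · obtain ⟨v, hv⟩ := hμ.exists_hasEigenvector
    exact (Submodule.ne_bot_iff _).2 ⟨v, (hmem v).2 hv.apply_eq_smul, hv.2⟩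
  · intro htop
    exact hS (ContinuousLinearMap.ext fun x => by simpa using (hmem x).1 (htop ▸ trivial))
  · intro T hT x hx
    rw [hmem] at hx ⊢
    rw [← hT.apply_apply, hx, map_smul]

end HasHyperinvariantSubspace

noncomputable def commutantOrbit (K : X →L[ℂ] X) (y : X) : Submodule ℂ X :=
  (Subalgebra.centralizer ℂ {K}).toSubmodule.map
    (ContinuousLinearMap.apply ℂ X y : (X →L[ℂ] X) →ₗ[ℂ] X)

theorem mem_commutantOrbit {K : X →L[ℂ] X} {y x : X} :
    x ∈ commutantOrbit K y ↔ ∃ T : X →L[ℂ] X, Commute T K ∧ T y = x := by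
  simp [commutantOrbit, Subalgebra.mem_centralizer_iff, commute_iff_eq, eq_comm]

theorem dense_commutantOrbit {K : X →L[ℂ] X} (h : ¬ HasHyperinvariantSubspace K) {y : X}
    (hy : y ≠ 0) : Dense (commutantOrbit K y : Set X) := by
  set Y := (commutantOrbit K y).topologicalClosure
  have hinv (T : X →L[ℂ] X) (hT : Commute T K) : ∀ x ∈ Y, T x ∈ Y := by
    have hmaps : Set.MapsTo T (commutantOrbit K y) (commutantOrbit K y) := by
      rintro _ hx
      obtain ⟨T', hT', rfl⟩ := mem_commutantOrbit.1 hx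
      exact mem_commutantOrbit.2 ⟨T * T', hT.mul_left hT', rfl⟩
    exact fun x hx => hmaps.closure T.continuous hx
  have hbot : Y ≠ ⊥ := (Submodule.ne_bot_iff _).2
    ⟨y, (commutantOrbit K y).le_topologicalClosure
      (mem_commutantOrbit.2 ⟨1, Commute.one_left K, rfl⟩), hy⟩
  refine Submodule.dense_iff_topologicalClosure_eq_top.2 (by_contra fun htop => h ?_)
  exact ⟨Y, (commutantOrbit K y).isClosed_topologicalClosure, hbot, htop, hinv⟩

theorem exists_norm_le_apply_mem_ball {K : X →L[ℂ] X} (hK : IsCompactOperator K)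
    (hdense : ∀ y ≠ 0, Dense (commutantOrbit K y : Set X)) {x₀ : X} (hx₀ : ‖K‖ < ‖K x₀‖) :
    ∃ M : ℝ, ∀ z ∈ ball x₀ 1, ∃ T : X →L[ℂ] X, Commute T K ∧ ‖T‖ ≤ M ∧ T (K z) ∈ ball x₀ 1 := by
  set C := closure (K '' ball x₀ 1)
  have hC : IsCompact C := hK.isCompact_closure_image_of_bounded isBounded_ball
  have hC0 : C ⊆ {y | ‖K x₀‖ - ‖K‖ ≤ ‖y‖} := by
    refine closure_minimal ?_ (isClosed_le continuous_const continuous_norm)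
    rintro _ ⟨z, hz, rfl⟩
    have hdist : ‖x₀ - z‖ ≤ 1 := by rw [← dist_eq_norm, dist_comm]; exact (mem_ball.1 hz).le
    calc ‖K x₀‖ - ‖K‖ ≤ ‖K x₀‖ - ‖K (x₀ - z)‖ := by
          gcongr
          exact K.le_opNorm_of_le hdist |>.trans_eq (mul_one _)
      _ ≤ ‖K z‖ := by
          rw [map_sub]
          linarith [norm_sub_norm_le (K x₀) (K z)]
  have hcover : C ⊆ ⋃ T : {T : X →L[ℂ] X // Commute T K}, T.1 ⁻¹' ball x₀ 1 := by
    intro y hy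
    have hy0 : y ≠ 0 := norm_pos_iff.1 ((sub_pos.2 hx₀).trans_le (hC0 hy))
    obtain ⟨_, hball, hmem⟩ :=
      (hdense y hy0).inter_open_nonempty _ isOpen_ball ⟨x₀, mem_ball_self one_pos⟩
    obtain ⟨T, hT, rfl⟩ := mem_commutantOrbit.1 hmem
    exact Set.mem_iUnion.2 ⟨⟨T, hT⟩, hball⟩
  obtain ⟨s, hs⟩ := hC.elim_finite_subcover _ (fun T => isOpen_ball.preimage T.1.continuous) hcover
  refine ⟨∑ T ∈ s, ‖T.1‖, fun z hz => ?_⟩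
  obtain ⟨T, hTs, hTz⟩ := Set.mem_iUnion₂.1 (hs (subset_closure (Set.mem_image_of_mem K hz)))
  exact ⟨T.1, T.2, Finset.single_le_sum (f := fun T => ‖T.1‖) (fun _ _ => norm_nonneg _) hTs, hTz⟩

theorem exists_norm_le_pow_apply_mem_ball {K : X →L[ℂ] X} {x₀ : X} {M : ℝ}
    (hM : ∀ z ∈ ball x₀ 1, ∃ T : X →L[ℂ] X, Commute T K ∧ ‖T‖ ≤ M ∧ T (K z) ∈ ball x₀ 1)
    (k : ℕ) : ∃ Q : X →L[ℂ] X, Commute Q K ∧ ‖Q‖ ≤ M ^ k ∧ Q ((K ^ k) x₀) ∈ ball x₀ 1 := by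
  induction k with
  | zero => exact ⟨1, Commute.one_left K, (pow_zero M).symm ▸ ContinuousLinearMap.norm_id_le,
      by simp⟩
  | succ k ih =>
    obtain ⟨Q, hQK, hQ, hQx⟩ := ih
    obtain ⟨T, hTK, hT, hTx⟩ := hM _ hQx
    refine ⟨T * Q, hTK.mul_left hQK, ?_, ?_⟩
    · calc ‖T * Q‖ ≤ ‖T‖ * ‖Q‖ := norm_mul_le _ _
        _ ≤ M * M ^ k := mul_le_mul hT hQ (norm_nonneg _) ((norm_nonneg _).trans hT)
        _ = M ^ (k + 1) := (pow_succ' _ _).symm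
    · rwa [pow_succ', mul_apply_eq_comp, mul_apply_eq_comp, hQK.apply_apply]

section Complete

variable [CompleteSpace X]

theorem IsCompactOperator.hasHyperinvariantSubspace_of_spectralRadius_eq_zero {K : X →L[ℂ] X}
    (hK : IsCompactOperator K) (hK0 : K ≠ 0) (hr : spectralRadius ℂ K = 0) :
    HasHyperinvariantSubspace K := by
  by_contra h
  obtain ⟨x₀, hx₀⟩ := ContinuousLinearMap.exists_lt_norm_apply hK0 ‖K‖
  obtain ⟨M, hM⟩ := exists_norm_le_apply_mem_ball hK (fun y hy => dense_commutantOrbit h hy) hx₀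
  have hx₀1 : 0 < ‖x₀‖ - 1 := by
    have := hx₀.trans_le (K.le_opNorm x₀)
    nlinarith [norm_pos_iff.2 hK0]
  have hlow (k : ℕ) : ‖x₀‖ - 1 ≤ M ^ k * ‖K ^ k‖ * ‖x₀‖ := by
    obtain ⟨Q, -, hQ, hQx⟩ := exists_norm_le_pow_apply_mem_ball hM k
    calc ‖x₀‖ - 1 ≤ ‖Q ((K ^ k) x₀)‖ := by
          rw [mem_ball, dist_eq_norm] at hQx
          linarith [norm_sub_norm_le x₀ (Q ((K ^ k) x₀)), norm_sub_rev x₀ (Q ((K ^ k) x₀))]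
      _ ≤ ‖Q‖ * (‖K ^ k‖ * ‖x₀‖) := Q.le_opNorm_of_le ((K ^ k).le_opNorm x₀)
      _ ≤ M ^ k * ‖K ^ k‖ * ‖x₀‖ := by
          rw [mul_assoc]
          gcongr
  have hsmall := (spectrum.tendsto_pow_mul_norm_pow_of_spectralRadius_eq_zero hr M).mul_const ‖x₀‖
  rw [zero_mul] at hsmall
  obtain ⟨k, hk⟩ := (hsmall.eventually (gt_mem_nhds hx₀1)).exists
  exact (hlow k).not_gt hk

theorem IsCompactOperator.hasHyperinvariantSubspace_of_spectralRadius_ne_zero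
    {K : X →L[ℂ] X} (hK : IsCompactOperator K) (hinf : ¬ FiniteDimensional ℂ X)
    (hr : spectralRadius ℂ K ≠ 0) :
    HasHyperinvariantSubspace K := by
  have : Nontrivial X := not_subsingleton_iff_nontrivial.1 fun _ => hinf inferInstance
  obtain ⟨μ, hμ, hμr⟩ := spectrum.exists_nnnorm_eq_spectralRadius K
  have hμ0 : μ ≠ 0 := by
    rintro rfl
    exact hr (by simpa using hμr.symm)
  exact .of_hasEigenvalue ((hK.hasEigenvalue_iff_mem_spectrum hμ0).2 hμ) (hK.ne_smul_one hinf hμ0)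

theorem IsCompactOperator.hasHyperinvariantSubspace {K : X →L[ℂ] X} (hK : IsCompactOperator K)
    (hinf : ¬ FiniteDimensional ℂ X) (hK0 : K ≠ 0) : HasHyperinvariantSubspace K := by
  rcases eq_or_ne (spectralRadius ℂ K) 0 with hr | hr
  · exact hK.hasHyperinvariantSubspace_of_spectralRadius_eq_zero hK0 hr
  · exact hK.hasHyperinvariantSubspace_of_spectralRadius_ne_zero hinf hr

end Complete

theorem strictlySingular_hyperinvariant_general
    [CompleteSpace X] (hinf : ¬ FiniteDimensional ℂ X)
    (S : X →L[ℂ] X) (hS : S ≠ 0)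
    (hcomp : IsCompactOperator fun x => S (S x)) :
    ∃ Y : Submodule ℂ X, IsClosed (Y : Set X) ∧ Y ≠ ⊥ ∧ Y ≠ ⊤ ∧
      ∀ T : X →L[ℂ] X, T.comp S = S.comp T → ∀ x ∈ Y, T x ∈ Y := by
  suffices HasHyperinvariantSubspace S from this
  by_cases hS2 : S ^ 2 = 0
  · exact .of_sq_eq_zero hS hS2
  · have hK : IsCompactOperator ⇑(S ^ 2) := by rwa [sq]
    exact (hK.hasHyperinvariantSubspace hinf hS2).of_pow

/-- A non-zero strictly singular operator on an infinite dimensional complex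
Banach space whose square is compact admits a non-trivial closed
hyperinvariant subspace. -/
theorem strictlySingular_hyperinvariant
    [CompleteSpace X] (hinf : ¬ FiniteDimensional ℂ X)
    (S : X →L[ℂ] X) (hS : S ≠ 0) (hss : StrictlySingular S)
    (hcomp : IsCompactOperator fun x => S (S x)) :
    ∃ Y : Submodule ℂ X, IsClosed (Y : Set X) ∧ Y ≠ ⊥ ∧ Y ≠ ⊤ ∧
      ∀ T : X →L[ℂ] X, T.comp S = S.comp T → ∀ x ∈ Y, T x ∈ Y :=
  strictlySingular_hyperinvariant_general hinf S hS hcomp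
end

section
/- Let T be the Tsirelson space (Figiel–Johnson), n ∈ ℕ, ε > 0, and x = Σ_{k∈F} c_k e_k a (n,ε)-basic special convex combination. Then for every G ⊆ F, ‖Σ_{k∈G} c_k e_k‖_T ≤ (1/2^n) Σ_{k∈G} c_k + ε. -/
/-- The norming set of the Figiel–Johnson Tsirelson space `T`: the smallest
symmetric set of finitely supported functionals containing the biorthogonal
functionals `e_i^*` and closed under the operation
`(f_1, …, f_d) ↦ (1/2)(f_1 + ⋯ + f_d)` for `S_1`-admissible (successive,
`d ≤ min supp f_1`) families. -/
inductive TsirelsonNorming : (ℕ →₀ ℝ) → Prop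
  | basis (i : ℕ) : TsirelsonNorming (Finsupp.single i 1)
  | neg {f : ℕ →₀ ℝ} : TsirelsonNorming f → TsirelsonNorming (-f)
  | op (d : ℕ) (g : Fin d → (ℕ →₀ ℝ)) :
      (∀ i, TsirelsonNorming (g i)) →
      (∀ i j : Fin d, i < j → ∀ a ∈ (g i).support, ∀ b ∈ (g j).support, a < b) →
      (∀ i : Fin d, ∀ a ∈ (g i).support, d ≤ a) →
      TsirelsonNorming ((2 : ℝ)⁻¹ • ∑ i, g i)

/-- The Tsirelson norm of a finitely supported vector. -/
noncomputable def tsirelsonNorm (x : ℕ →₀ ℝ) : ℝ :=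
  sSup {r : ℝ | ∃ f : ℕ →₀ ℝ, TsirelsonNorming f ∧
    (x.sum fun i v => f i * v) = r}

/-!
Every norming functional `f` is, at each level `m`, small off a Schreier set: there is
`E ∈ S_m` with `|f k| ≤ 2^{-(m+1)}` for all `k ≥ 1` outside `E`. This follows by induction
on the construction of `f`: for `f = (g_1 + ⋯ + g_d)/2` with `(g_i)` `S_1`-admissible, the
level-`m` sets of the `g_i`, restricted to their supports, unite to a set in `S_{m+1}`, and the
factor `1/2` raises the exponent. Pairing `f` with `∑_{k∈G} c_k e_k` then splits into the part on `G ∩ E`, bounded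
by `∑_{G∩E} c_k < ε` because `G ∩ E ∈ S_{n-1}`, and the part off `E`, bounded by
`2^{-n} ∑_G c_k`.
-/

open Finset

namespace Schreier

theorem empty_mem (m : ℕ) : (∅ : Finset ℕ) ∈ Schreier m := by
  cases m with
  | zero => simp [Schreier]
  | succ m => exact ⟨0, Fin.elim0, fun i => i.elim0, fun i => i.elim0, fun i => i.elim0, by simp, by simp⟩

theorem singleton_mem (m : ℕ) {i : ℕ} (hi : 1 ≤ i) : ({i} : Finset ℕ) ∈ Schreier m := by
  induction m with
  | zero => simp [Schreier]
  | succ m ih =>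
    refine ⟨1, fun _ => {i}, fun _ => ih, fun _ => singleton_nonempty i, ?_, by simp, ?_⟩
    · intro a b hab
      exact absurd hab (by omega)
    · simpa using hi

/-- Empty pieces may occur in the union: they are dropped by reindexing the nonempty ones. -/
theorem biUnion_mem {m d : ℕ} (G : Fin d → Finset ℕ) (hG : ∀ i, G i ∈ Schreier m)
    (hsucc : ∀ i j : Fin d, i < j → ∀ a ∈ G i, ∀ b ∈ G j, a < b)
    (hmin : ∀ a ∈ univ.biUnion G, d ≤ a) :
    univ.biUnion G ∈ Schreier (m + 1) := by
  classical
  set s : Finset (Fin d) := univ.filter fun i => (G i).Nonempty with hs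
  let e := s.orderIsoOfFin rfl
  refine ⟨s.card, fun j => G (e j), fun j => hG _, fun j => (mem_filter.1 (e j).2).2,
    fun i j hij => hsucc (e i) (e j) (e.strictMono hij), ?_, ?_⟩
  · ext a
    simp only [mem_biUnion, mem_univ, true_and]
    constructor
    · rintro ⟨i, hi⟩
      have his : i ∈ s := mem_filter.2 ⟨mem_univ _, a, hi⟩
      exact ⟨e.symm ⟨i, his⟩, by simpa using hi⟩
    · rintro ⟨j, hj⟩
      exact ⟨e j, hj⟩
  · intro a ha
    calc s.card ≤ (univ : Finset (Fin d)).card := card_le_card (subset_univ s)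
      _ = d := card_fin d
      _ ≤ a := hmin a ha

theorem mem_of_subset {m : ℕ} {F H : Finset ℕ} (hF : F ∈ Schreier m) (hHF : H ⊆ F) :
    H ∈ Schreier m := by
  induction m generalizing F H with
  | zero => exact (card_le_card hHF).trans hF
  | succ m ih =>
    classical
    obtain ⟨d, G, hG, -, hsucc, rfl, hmin⟩ := hF
    have hH : H = univ.biUnion fun i => G i ∩ H := by
      ext a
      simp only [mem_biUnion, mem_univ, true_and, mem_inter]
      constructor
      · intro ha
        obtain ⟨i, -, hi⟩ := mem_biUnion.1 (hHF ha)
        exact ⟨i, hi, ha⟩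
      · rintro ⟨i, -, ha⟩
        exact ha
    rw [hH]
    refine biUnion_mem _ (fun i => ih (hG i) inter_subset_left)
      (fun i j hij a ha b hb => hsucc i j hij a (mem_inter.1 ha).1 b (mem_inter.1 hb).1) ?_
    rw [← hH]
    exact fun a ha => hmin a (hHF ha)

theorem one_le_of_mem_succ {m : ℕ} {F : Finset ℕ} (hF : F ∈ Schreier (m + 1)) {a : ℕ}
    (ha : a ∈ F) : 1 ≤ a := by
  obtain ⟨d, G, -, -, -, rfl, hmin⟩ := hF
  obtain ⟨i, -, -⟩ := mem_biUnion.1 ha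
  exact (Nat.one_le_iff_ne_zero.2 (Fin.pos i).ne').trans (hmin a ha)

end Schreier

theorem abs_sum_apply_le_of_successive {d : ℕ} {g : Fin d → ℕ →₀ ℝ}
    (hsucc : ∀ i j : Fin d, i < j → ∀ a ∈ (g i).support, ∀ b ∈ (g j).support, a < b)
    (k : ℕ) {b : ℝ} (hb : 0 ≤ b) (hgb : ∀ i, k ∈ (g i).support → |g i k| ≤ b) :
    |(∑ i, g i) k| ≤ b := by
  rw [Finsupp.finsetSum_apply]
  by_cases hk : ∃ i, k ∈ (g i).support
  · obtain ⟨i, hi⟩ := hk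
    have hsingle : ∑ j, g j k = g i k := by
      refine sum_eq_single i (fun j _ hji => ?_) (by simp)
      by_contra hj
      rcases lt_or_gt_of_ne hji with hlt | hlt
      · exact lt_irrefl k (hsucc j i hlt k (Finsupp.mem_support_iff.2 hj) k hi)
      · exact lt_irrefl k (hsucc i j hlt k hi k (Finsupp.mem_support_iff.2 hj))
    rw [hsingle]
    exact hgb i hi
  · push Not at hk
    rw [sum_eq_zero fun i _ => Finsupp.notMem_support_iff.1 (hk i), abs_zero]
    exact hb

namespace TsirelsonNorming

theorem abs_apply_le_one {f : ℕ →₀ ℝ} (hf : TsirelsonNorming f) (k : ℕ) : |f k| ≤ 1 := by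
  induction hf generalizing k with
  | basis i =>
    rw [Finsupp.single_apply]
    split <;> simp
  | neg _ ih => simpa using ih k
  | op d g _ hsucc _ ih =>
    rw [Finsupp.smul_apply, smul_eq_mul, abs_mul, abs_of_pos (by norm_num : (0 : ℝ) < 2⁻¹)]
    have := abs_sum_apply_le_of_successive hsucc k zero_le_one fun i _ => ih i k
    linarith

theorem exists_schreier_abs_apply_le {f : ℕ →₀ ℝ} (hf : TsirelsonNorming f) (m : ℕ) :
    ∃ E ∈ Schreier m, ∀ k, 1 ≤ k → k ∉ E → |f k| ≤ 1 / 2 ^ (m + 1) := by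
  induction hf generalizing m with
  | basis i =>
    by_cases hi : 1 ≤ i
    · refine ⟨{i}, Schreier.singleton_mem m hi, fun k _ hkE => ?_⟩
      rw [Finsupp.single_apply, if_neg (by simpa [eq_comm] using hkE), abs_zero]
      positivity
    · refine ⟨∅, Schreier.empty_mem m, fun k hk _ => ?_⟩
      rw [Finsupp.single_apply, if_neg (by omega), abs_zero]
      positivity
  | neg _ ih =>
    obtain ⟨E, hE, hfE⟩ := ih m
    exact ⟨E, hE, fun k hk hkE => by simpa using hfE k hk hkE⟩
  | op d g hg hsucc hmin ih =>
    simp only [Finsupp.smul_apply, smul_eq_mul, abs_mul,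
      abs_of_pos (by norm_num : (0 : ℝ) < 2⁻¹)]
    cases m with
    | zero =>
      refine ⟨∅, Schreier.empty_mem 0, fun k _ _ => ?_⟩
      have := abs_sum_apply_le_of_successive hsucc k zero_le_one
        fun i _ => (hg i).abs_apply_le_one k
      linarith
    | succ m =>
      classical
      choose E hE hgE using fun i => ih i m
      -- Intersecting with the supports keeps the pieces successive and above `d`.
      refine ⟨univ.biUnion fun i => E i ∩ (g i).support,
        Schreier.biUnion_mem _ (fun i => Schreier.mem_of_subset (hE i) inter_subset_left)
          (fun i j hij a ha b hb => hsucc i j hij a (mem_inter.1 ha).2 b (mem_inter.1 hb).2)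
          (fun a ha => ?_), fun k hk hkE => ?_⟩
      · obtain ⟨i, -, hai⟩ := mem_biUnion.1 ha
        exact hmin i a (mem_inter.1 hai).2
      · have hgk : ∀ i, k ∈ (g i).support → |g i k| ≤ 1 / 2 ^ (m + 1) := fun i hki =>
          hgE i k hk fun hkEi => hkE (mem_biUnion.2 ⟨i, mem_univ _, mem_inter.2 ⟨hkEi, hki⟩⟩)
        have := abs_sum_apply_le_of_successive hsucc k (by positivity) hgk
        calc 2⁻¹ * |(∑ i, g i) k| ≤ 2⁻¹ * (1 / 2 ^ (m + 1)) := by gcongr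
          _ = 1 / 2 ^ (m + 1 + 1) := by ring

theorem exists_schreier_pred_abs_apply_le {f : ℕ →₀ ℝ} (hf : TsirelsonNorming f) {n : ℕ}
    {F : Finset ℕ} (hF : F ∈ Schreier n) :
    ∃ E ∈ Schreier (n - 1), ∀ k ∈ F, k ∉ E → |f k| ≤ 1 / 2 ^ n := by
  cases n with
  | zero => exact ⟨∅, Schreier.empty_mem _, fun k _ _ => by simpa using hf.abs_apply_le_one k⟩
  | succ m =>
    obtain ⟨E, hE, hfE⟩ := hf.exists_schreier_abs_apply_le m
    exact ⟨E, hE, fun k hk => hfE k (Schreier.one_le_of_mem_succ hF hk)⟩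

end TsirelsonNorming

theorem sum_mul_le_sum_inter_add_mul_sum {ι : Type*} [DecidableEq ι] {G E : Finset ι}
    {f c : ι → ℝ} {b : ℝ} (hb : 0 ≤ b) (hc : ∀ k ∈ G, 0 ≤ c k) (hf : ∀ k ∈ G, |f k| ≤ 1)
    (hfE : ∀ k ∈ G, k ∉ E → |f k| ≤ b) :
    ∑ k ∈ G, f k * c k ≤ ∑ k ∈ G ∩ E, c k + b * ∑ k ∈ G, c k := by
  have hin : ∑ k ∈ G ∩ E, f k * c k ≤ ∑ k ∈ G ∩ E, c k := by
    refine sum_le_sum fun k hk => ?_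
    have hkG := (mem_inter.1 hk).1
    nlinarith [abs_le.1 (hf k hkG), hc k hkG]
  have hout : ∑ k ∈ G \ E, f k * c k ≤ b * ∑ k ∈ G, c k := by
    rw [mul_sum]
    calc ∑ k ∈ G \ E, f k * c k ≤ ∑ k ∈ G \ E, b * c k := by
          refine sum_le_sum fun k hk => ?_
          obtain ⟨hkG, hkE⟩ := mem_sdiff.1 hk
          nlinarith [abs_le.1 (hfE k hkG hkE), hc k hkG]
      _ ≤ ∑ k ∈ G, b * c k :=
          sum_le_sum_of_subset_of_nonneg sdiff_subset fun k hk _ => mul_nonneg hb (hc k hk)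
  rw [← sum_inter_add_sum_sdiff G E fun k => f k * c k]
  linarith

theorem pairing_sum_single (G : Finset ℕ) (c : ℕ → ℝ) (f : ℕ →₀ ℝ) :
    ((∑ k ∈ G, Finsupp.single k (c k)).sum fun i v => f i * v) = ∑ k ∈ G, f k * c k := by
  rw [← Finsupp.sum_finsetSum_index (fun _ => mul_zero _) fun _ _ _ => mul_add _ _ _]
  exact sum_congr rfl fun k _ => Finsupp.sum_single_index (mul_zero _)

theorem tsirelson_norm_of_scc_general (n : ℕ) (ε : ℝ)
    (F : Finset ℕ) (c : ℕ → ℝ) (hscc : IsBasicSCC n ε F c) :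
    ∀ G ⊆ F,
      tsirelsonNorm (∑ k ∈ G, Finsupp.single k (c k)) ≤
        (1 / 2 ^ n) * ∑ k ∈ G, c k + ε := by
  obtain ⟨hF, hc, -, hsmall⟩ := hscc
  intro G hG
  refine csSup_le ⟨_, _, .basis 0, rfl⟩ ?_
  rintro r ⟨f, hf, rfl⟩
  obtain ⟨E, hE, hfE⟩ := hf.exists_schreier_pred_abs_apply_le hF
  have hGE : ∑ k ∈ G ∩ E, c k < ε :=
    hsmall _ (inter_subset_left.trans hG) (Schreier.mem_of_subset hE inter_subset_right)
  have hpair := sum_mul_le_sum_inter_add_mul_sum (by positivity) (fun k hk => hc k (hG hk))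
    (fun k _ => hf.abs_apply_le_one k) (fun k hk => hfE k (hG hk))
  rw [pairing_sum_single]
  linarith

/-- If `x = ∑_{k∈F} c_k e_k` is an `(n,ε)`-basic special convex combination,
then for every `G ⊆ F`,
`‖∑_{k∈G} c_k e_k‖_T ≤ (1/2ⁿ) ∑_{k∈G} c_k + ε`. -/
theorem tsirelson_norm_of_scc (n : ℕ) (ε : ℝ) (hε : 0 < ε)
    (F : Finset ℕ) (c : ℕ → ℝ) (hscc : IsBasicSCC n ε F c) :
    ∀ G ⊆ F,
      tsirelsonNorm (∑ k ∈ G, Finsupp.single k (c k)) ≤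
        (1 / 2 ^ n) * ∑ k ∈ G, c k + ε :=
  tsirelson_norm_of_scc_general n ε F c hscc
end
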